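/- arXiv:1104.4165 — 9 statements merged into one kernel-verified Lean document; each statement's English description precedes it below -/
import Mathlib

section
/- Let H be a subgroup of O(V). If the maximal trivial subspace V^H is totally isotropic, then V^H ⊆ S(V,H). -/
/-- The orthogonal group of a bilinear form `B`: all linear automorphisms `g` of `V`
with `B (g x) (g y) = B x y` for all `x, y`. -/
def orthogonalGroup {V : Type*} [AddCommGroup V] [Module ℝ V]
    (B : LinearMap.BilinForm ℝ V) : Subgroup (V ≃ₗ[ℝ] V) where
  carrier := {g | ∀ x y : V, B (g x) (g y) = B x y}
  one_mem' := fun _ _ => rfl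
  mul_mem' := by
    intro a b ha hb x y
    have : ∀ z : V, (a * b) z = a (b z) := fun _ => rfl
    rw [this, this, ha, hb]
  inv_mem' := by
    intro a ha x y
    have h := ha (a⁻¹ x) (a⁻¹ y)
    have h1 : a (a⁻¹ x) = x := a.apply_symm_apply x
    have h2 : a (a⁻¹ y) = y := a.apply_symm_apply y
    rw [h1, h2] at h
    exact h.symm

/-- A subspace `W` is invariant under a group `G` of linear automorphisms. -/
def InvariantUnder {V : Type*} [AddCommGroup V] [Module ℝ V]
    (G : Subgroup (V ≃ₗ[ℝ] V)) (W : Submodule ℝ V) : Prop :=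
  ∀ g ∈ G, ∀ w ∈ W, g w ∈ W

/-- `W^G`: the maximal trivial subspace of `G` in `W`, i.e. all `w ∈ W` fixed by every
element of `G`. -/
def fixedSubspace {V : Type*} [AddCommGroup V] [Module ℝ V]
    (G : Subgroup (V ≃ₗ[ℝ] V)) (W : Submodule ℝ V) : Submodule ℝ V where
  carrier := {w | w ∈ W ∧ ∀ g ∈ G, g w = w}
  add_mem' := by
    rintro a b ⟨haW, ha⟩ ⟨hbW, hb⟩
    exact ⟨W.add_mem haW hbW, fun g hg => by rw [map_add, ha g hg, hb g hg]⟩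
  zero_mem' := ⟨W.zero_mem, fun g _ => map_zero _⟩
  smul_mem' := by
    rintro c a ⟨haW, ha⟩
    exact ⟨W.smul_mem c haW, fun g hg => by rw [map_smul, ha g hg]⟩

/-- `S(W,G)`: the span of all `w - g w` with `w ∈ W`, `g ∈ G`. -/
def movedSpan {V : Type*} [AddCommGroup V] [Module ℝ V]
    (G : Subgroup (V ≃ₗ[ℝ] V)) (W : Submodule ℝ V) : Submodule ℝ V :=
  Submodule.span ℝ {x | ∃ w ∈ W, ∃ g ∈ G, x = w - g w}

/-- The restriction of `B` to `W` is nondegenerate. -/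
def NondegOn {V : Type*} [AddCommGroup V] [Module ℝ V]
    (B : LinearMap.BilinForm ℝ V) (W : Submodule ℝ V) : Prop :=
  ∀ w ∈ W, (∀ u ∈ W, B w u = 0) → w = 0

/-- `W` is totally isotropic for `B`. -/
def TotallyIsotropic {V : Type*} [AddCommGroup V] [Module ℝ V]
    (B : LinearMap.BilinForm ℝ V) (W : Submodule ℝ V) : Prop :=
  ∀ x ∈ W, ∀ y ∈ W, B x y = 0

/-- `W` is a maximal nondegenerate subspace of `U` (maximal under inclusion among
nondegenerate subspaces of `U`). -/
def IsMaxNondegIn {V : Type*} [AddCommGroup V] [Module ℝ V]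
    (B : LinearMap.BilinForm ℝ V) (U W : Submodule ℝ V) : Prop :=
  W ≤ U ∧ NondegOn B W ∧ ∀ W' : Submodule ℝ V, W' ≤ U → NondegOn B W' → W ≤ W' → W' = W

/-- A nonzero nondegenerate `G`-invariant subspace `W` is indecomposable if it cannot be
written as a direct sum of two nonzero mutually orthogonal nondegenerate `G`-invariant
subspaces. -/
def IsIndecomposable {V : Type*} [AddCommGroup V] [Module ℝ V]
    (B : LinearMap.BilinForm ℝ V) (G : Subgroup (V ≃ₗ[ℝ] V)) (W : Submodule ℝ V) : Prop :=
  W ≠ ⊥ ∧ NondegOn B W ∧ InvariantUnder G W ∧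
    ∀ U₁ U₂ : Submodule ℝ V, U₁ ⊔ U₂ = W → U₁ ⊓ U₂ = ⊥ →
      InvariantUnder G U₁ → InvariantUnder G U₂ → NondegOn B U₁ → NondegOn B U₂ →
      (∀ x ∈ U₁, ∀ y ∈ U₂, B x y = 0) → U₁ = ⊥ ∨ U₂ = ⊥

/-- `W` admits no nontrivial decomposition into `G`-invariant subspaces. -/
def NoNontrivialDecomp {V : Type*} [AddCommGroup V] [Module ℝ V]
    (G : Subgroup (V ≃ₗ[ℝ] V)) (W : Submodule ℝ V) : Prop :=
  ∀ U₁ U₂ : Submodule ℝ V, U₁ ⊔ U₂ = W → U₁ ⊓ U₂ = ⊥ →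
    InvariantUnder G U₁ → InvariantUnder G U₂ → U₁ = ⊥ ∨ U₂ = ⊥

/-- Condition Φ: every indecomposable nondegenerate `H`-invariant subspace `W` with
`W^H ≠ 0` admits no nontrivial decomposition into `H`-invariant subspaces. -/
def ConditionPhi {V : Type*} [AddCommGroup V] [Module ℝ V]
    (B : LinearMap.BilinForm ℝ V) (H : Subgroup (V ≃ₗ[ℝ] V)) : Prop :=
  ∀ W : Submodule ℝ V, IsIndecomposable B H W → fixedSubspace H W ≠ ⊥ →
    NoNontrivialDecomp H W

/-- `H` is the internal direct product of the subgroups `Hs i`: each `Hs i` is a normal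
subgroup of `H`, elements of distinct factors commute, and every element of `H` is,
in a unique way, the product of one element from each factor. -/
def IsInternalDirectProduct {G : Type*} [Group G] (H : Subgroup G) {k : ℕ}
    (Hs : Fin k → Subgroup G) : Prop :=
  (∀ i, Hs i ≤ H) ∧
  (∀ i, ∀ h ∈ H, ∀ x ∈ Hs i, h * x * h⁻¹ ∈ Hs i) ∧
  (∀ i j, i ≠ j → ∀ x ∈ Hs i, ∀ y ∈ Hs j, x * y = y * x) ∧
  (∀ h ∈ H, ∃! f : ∀ i, Hs i, h = (List.ofFn fun i => ((f i : G))).prod)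

/-- The Borel–Lichnerowicz splitting property: for every direct-sum decomposition
`V = U 0 ⊕ U 1 ⊕ ⋯ ⊕ U k` into mutually orthogonal `H`-invariant subspaces with
`U 0 ⊆ V^H` and each `U i` (`i ≥ 1`) nondegenerate, `H` is the internal direct product
of normal subgroups `Hs 1, …, Hs k` such that each `Hs i` maps `U i` into itself and
acts as the identity on `U j` for every `j ≠ i`. -/
def BorelLichnerowicz {V : Type*} [AddCommGroup V] [Module ℝ V]
    (B : LinearMap.BilinForm ℝ V) (H : Subgroup (V ≃ₗ[ℝ] V)) : Prop :=
  ∀ (k : ℕ) (U : Fin (k + 1) → Submodule ℝ V),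
    iSupIndep U → iSup U = ⊤ →
    (∀ i j, i ≠ j → ∀ x ∈ U i, ∀ y ∈ U j, B x y = 0) →
    (∀ i, InvariantUnder H (U i)) →
    U 0 ≤ fixedSubspace H ⊤ →
    (∀ i : Fin k, NondegOn B (U i.succ)) →
    ∃ Hs : Fin k → Subgroup (V ≃ₗ[ℝ] V),
      IsInternalDirectProduct H Hs ∧
      ∀ i : Fin k,
        (∀ g ∈ Hs i, ∀ x ∈ U i.succ, g x ∈ U i.succ) ∧
        (∀ j : Fin (k + 1), j ≠ i.succ → ∀ g ∈ Hs i, ∀ x ∈ U j, g x = x)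

/-- If the maximal trivial subspace `V^H` is totally isotropic, then
`V^H ⊆ S(V,H)`. -/
theorem fixed_le_movedSpan_of_totallyIsotropic
    {V : Type*} [AddCommGroup V] [Module ℝ V] [FiniteDimensional ℝ V]
    (B : LinearMap.BilinForm ℝ V)
    (hsymm : ∀ x y : V, B x y = B y x) (hnd : NondegOn B ⊤)
    (H : Subgroup (V ≃ₗ[ℝ] V)) (hH : H ≤ orthogonalGroup B)
    (hiso : TotallyIsotropic B (fixedSubspace H ⊤)) :
    fixedSubspace H ⊤ ≤ movedSpan H ⊤ := by
  classical
  set F := fixedSubspace H (⊤ : Submodule ℝ V) with hF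
  set S := movedSpan H (⊤ : Submodule ℝ V) with hS
  have hrefl : B.IsRefl := fun x y h => (hsymm y x).trans h
  have hndB : B.Nondegenerate := hrefl.nondegenerate_iff_separatingLeft.mpr (fun m h => hnd m Submodule.mem_top (fun u _ => h u))
  have key : B.orthogonal S = F := by
    ext x
    constructor
    · intro hx
      refine ⟨Submodule.mem_top, fun g hg => ?_⟩
      have hgin : ∀ v : V, B v (x - g x) = 0 := by
        intro v
        have h1 : B (g⁻¹ v - g (g⁻¹ v)) x = 0 := by
          apply hx
          exact Submodule.subset_span ⟨g⁻¹ v, Submodule.mem_top, g, hg, rfl⟩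
        have h2 : g (g⁻¹ v) = v := g.apply_symm_apply v
        rw [h2, map_sub] at h1
        rw [LinearMap.sub_apply, sub_eq_zero] at h1
        have h3 : B (g⁻¹ v) (g⁻¹ (g x)) = B v (g x) := hH (H.inv_mem hg) v (g x)
        have h4 : (g⁻¹ : V ≃ₗ[ℝ] V) (g x) = x := g.symm_apply_apply x
        rw [h4] at h3
        rw [map_sub, ← h3, h1, sub_self]
      have := hnd (x - g x) Submodule.mem_top
        (fun u _ => (hsymm (x - g x) u).trans (hgin u))
      exact (sub_eq_zero.mp this).symm
    · rintro ⟨-, hx⟩ n hn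
      refine Submodule.span_induction ?_ ?_ ?_ ?_ hn
      · rintro y ⟨w, -, g, hg, rfl⟩
        have h1 : B (g w) (g x) = B w x := hH hg w x
        rw [hx g hg] at h1
        simp [LinearMap.BilinForm.IsOrtho, h1]
      · simp [LinearMap.BilinForm.IsOrtho]
      · intro a b _ _ ha hb
        simp only [LinearMap.BilinForm.IsOrtho, map_add, LinearMap.add_apply] at *
        rw [ha, hb, add_zero]
      · intro c a _ ha
        simp only [LinearMap.BilinForm.IsOrtho, map_smul, LinearMap.smul_apply] at *
        rw [ha, smul_zero]
  have hSF : S = B.orthogonal F := by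
    rw [← key, LinearMap.BilinForm.orthogonal_orthogonal hndB hrefl]
  rw [hSF]
  intro x hxF
  rw [LinearMap.BilinForm.mem_orthogonal_iff]
  intro n hnF
  exact hiso n hnF x hxF
end

section
/- Let H be a subgroup of O(V) with the Borel–Lichnerowicz splitting property, and suppose the maximal trivial subspace V^H is nondegenerate. Suppose V = V^H ⊕ V¹ ⊕ ⋯ ⊕ V^p is a direct-sum decomposition into H-invariant subspaces such that each V^i (1 ≤ i ≤ p) is nondegenerate and indecomposable, and ⟨x,y⟩ = 0 for all x ∈ V^H and all y ∈ V¹ ⊕ ⋯ ⊕ V^p. Then the decomposition is orthogonal: ⟨x,y⟩ = 0 for all x ∈ V^i and y ∈ V^j whenever 1 ≤ i < j ≤ p. -/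
/-- If `H` has the Borel–Lichnerowicz splitting property, `V^H` is
nondegenerate, and `V = V^H ⊕ V¹ ⊕ ⋯ ⊕ V^p` is a direct-sum decomposition into
`H`-invariant subspaces with each `V^i` nondegenerate and indecomposable and with `V^H`
orthogonal to `V¹ ⊕ ⋯ ⊕ V^p`, then the decomposition is orthogonal. -/
theorem decomposition_orthogonal_of_fixed_nondeg
    {V : Type*} [AddCommGroup V] [Module ℝ V] [FiniteDimensional ℝ V]
    (B : LinearMap.BilinForm ℝ V)
    (hsymm : ∀ x y : V, B x y = B y x) (hnd : NondegOn B ⊤)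
    (H : Subgroup (V ≃ₗ[ℝ] V)) (hH : H ≤ orthogonalGroup B)
    (hBL : BorelLichnerowicz B H)
    (hfixnd : NondegOn B (fixedSubspace H ⊤))
    (p : ℕ) (W : Fin p → Submodule ℝ V)
    (hind : iSupIndep (Fin.cons (fixedSubspace H ⊤) W : Fin (p + 1) → Submodule ℝ V))
    (hsup : iSup (Fin.cons (fixedSubspace H ⊤) W : Fin (p + 1) → Submodule ℝ V) = ⊤)
    (hinv : ∀ i, InvariantUnder H (W i))
    (hindec : ∀ i, IsIndecomposable B H (W i))
    (horth0 : ∀ x ∈ fixedSubspace H ⊤, ∀ y ∈ ⨆ i, W i, B x y = 0) :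
    ∀ i j, i ≠ j → ∀ x ∈ W i, ∀ y ∈ W j, B x y = 0 := by
  intro i j hij x hx y hy
  obtain ⟨-, hWnd, hWinv, -⟩ := hindec i
  have hBrefl : B.IsRefl := fun a b h => by rw [hsymm]; exact h
  -- pairwise disjointness facts from the independence hypothesis
  have hdisjW : Disjoint (W i) (W j) := by
    have h := hind.pairwiseDisjoint
      (show (Fin.succ i : Fin (p + 1)) ≠ Fin.succ j from
        fun h => hij (Fin.succ_injective _ h))
    simpa [Function.onFun, Fin.cons_succ] using h
  have hdisjF : Disjoint (fixedSubspace H ⊤) (W i) := by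
    have h := hind.pairwiseDisjoint
      (show (0 : Fin (p + 1)) ≠ Fin.succ i from (Fin.succ_ne_zero i).symm)
    simpa [Function.onFun, Fin.cons_zero, Fin.cons_succ] using h
  -- the restricted form on `W i` is nondegenerate
  have hndres : (B.restrict (W i)).Nondegenerate := by
    refine ⟨?_, ?_⟩
    · rintro ⟨w, hw⟩ h
      exact Subtype.ext (hWnd w hw fun u hu => h ⟨u, hu⟩)
    · rintro ⟨w, hw⟩ h
      exact Subtype.ext (hWnd w hw fun u hu => by rw [hsymm]; exact h ⟨u, hu⟩)
  -- the orthogonal complement of `W i`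
  set Y : Submodule ℝ V := B.orthogonal (W i) with hYdef
  have hcompl : IsCompl (W i) Y :=
    (LinearMap.BilinForm.restrict_nondegenerate_iff_isCompl_orthogonal hBrefl).mp hndres
  have horthWY : ∀ a ∈ W i, ∀ b ∈ Y, B a b = 0 := fun a ha b hb => hb a ha
  have hsupWY : ∀ v : V, ∃ u1 ∈ W i, ∃ u2 ∈ Y, v = u1 + u2 := by
    intro v
    have hv : v ∈ W i ⊔ Y := by rw [hcompl.sup_eq_top]; trivial
    obtain ⟨u1, hu1, u2, hu2, h⟩ := Submodule.mem_sup.mp hv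
    exact ⟨u1, hu1, u2, hu2, h.symm⟩
  -- `Y` is `H`-invariant
  have hYinv : InvariantUnder H Y := by
    intro g hg w hw a ha
    have hgi : g⁻¹ ∈ H := H.inv_mem hg
    have h1 : g (g⁻¹ a) = a := g.apply_symm_apply a
    have h2 : B (g (g⁻¹ a)) (g w) = B (g⁻¹ a) w := hH hg _ _
    rw [h1] at h2
    show B a (g w) = 0
    rw [h2]
    exact hw (g⁻¹ a) (hinv i g⁻¹ hgi a ha)
  -- `Y` is nondegenerate
  have hYnd : NondegOn B Y := by
    intro w hw h
    refine hnd w trivial fun u _ => ?_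
    obtain ⟨u1, hu1, u2, hu2, rfl⟩ := hsupWY u
    have h1 : B w u1 = 0 := by rw [hsymm]; exact hw u1 hu1
    have h2 : B w u2 = 0 := h u2 hu2
    rw [map_add, h1, h2, add_zero]
  -- apply the Borel–Lichnerowicz property to `V = 0 ⊕ W i ⊕ Y`
  set U : Fin 3 → Submodule ℝ V := ![⊥, W i, Y] with hUdef
  have hU0 : U 0 = ⊥ := rfl
  have hU1 : U 1 = W i := rfl
  have hU2 : U 2 = Y := rfl
  have hUle : ∀ b : Fin 3, b ≠ 1 → U b ≤ Y := by
    intro b hb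
    fin_cases b
    · exact bot_le
    · exact absurd rfl hb
    · exact le_rfl
  have hUle' : ∀ b : Fin 3, b ≠ 2 → U b ≤ W i := by
    intro b hb
    fin_cases b
    · exact bot_le
    · exact le_rfl
    · exact absurd rfl hb
  have hUind : iSupIndep U := by
    rw [iSupIndep_def]
    intro a
    fin_cases a
    · exact disjoint_bot_left
    · refine Disjoint.mono_right ?_ hcompl.disjoint
      exact iSup_le fun b => iSup_le fun hb => hUle b hb
    · refine Disjoint.mono_right ?_ hcompl.disjoint.symm
      exact iSup_le fun b => iSup_le fun hb => hUle' b hb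
  have hUsup : iSup U = ⊤ := by
    refine top_unique ?_
    rw [← hcompl.sup_eq_top]
    exact sup_le (le_iSup U 1) (le_iSup U 2)
  have hUorth : ∀ a b : Fin 3, a ≠ b → ∀ u ∈ U a, ∀ v ∈ U b, B u v = 0 := by
    intro a b hab u hu v hv
    fin_cases a <;> fin_cases b
    · exact absurd rfl hab
    · rw [(Submodule.mem_bot ℝ).mp hu, map_zero, LinearMap.zero_apply]
    · rw [(Submodule.mem_bot ℝ).mp hu, map_zero, LinearMap.zero_apply]
    · rw [(Submodule.mem_bot ℝ).mp hv, map_zero]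
    · exact absurd rfl hab
    · exact horthWY u hu v hv
    · rw [(Submodule.mem_bot ℝ).mp hv, map_zero]
    · rw [hsymm]; exact horthWY v hv u hu
    · exact absurd rfl hab
  have hUinv : ∀ a, InvariantUnder H (U a) := by
    intro a
    fin_cases a
    · intro g _ w hw
      rw [(Submodule.mem_bot ℝ).mp hw, map_zero]
      exact Submodule.zero_mem _
    · exact hinv i
    · exact hYinv
  have hUnd : ∀ a : Fin 2, NondegOn B (U a.succ) := by
    intro a
    fin_cases a
    · exact hWnd
    · exact hYnd
  obtain ⟨Hs, ⟨hHsle, -, -, hprod⟩, hHs⟩ :=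
    hBL 2 U hUind hUsup hUorth hUinv (hU0 ▸ bot_le) hUnd
  have hK1 : ∀ g ∈ Hs 0, ∀ u ∈ W i, g u ∈ W i := (hHs 0).1
  have hK2 : ∀ g ∈ Hs 0, ∀ u ∈ Y, g u = u := fun g hg u hu =>
    (hHs 0).2 2 (by decide) g hg u hu
  have hK'1 : ∀ g ∈ Hs 1, ∀ u ∈ W i, g u = u := fun g hg u hu =>
    (hHs 1).2 1 (by decide) g hg u hu
  -- `Hs 0` fixes `W j` pointwise
  have hKfix : ∀ k ∈ Hs 0, ∀ w ∈ W j, k w = w := by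
    intro k hk w hw
    have hkH : k ∈ H := hHsle 0 hk
    obtain ⟨u1, hu1, u2, hu2, rfl⟩ := hsupWY w
    have h2 : k u2 = u2 := hK2 k hk u2 hu2
    have hmem1 : k (u1 + u2) - (u1 + u2) ∈ W i := by
      have : k (u1 + u2) - (u1 + u2) = k u1 - u1 := by
        rw [map_add, h2]; abel
      rw [this]
      exact sub_mem (hK1 k hk u1 hu1) hu1
    have hmem2 : k (u1 + u2) - (u1 + u2) ∈ W j :=
      sub_mem (hinv j k hkH _ hw) hw
    have : k (u1 + u2) - (u1 + u2) = 0 :=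
      (Submodule.mem_bot ℝ).mp (hdisjW.le_bot ⟨hmem1, hmem2⟩)
    exact sub_eq_zero.mp this
  -- the element `z ∈ W i` representing the functional `B (·) y` on `W i`
  set φ : Module.Dual ℝ (W i) := (B.flip y).comp (W i).subtype with hφdef
  set z0 : W i := ((B.restrict (W i)).toDual hndres).symm φ with hz0def
  set z : V := (z0 : V) with hzdef
  have hzW : z ∈ W i := z0.2
  have hz : ∀ w ∈ W i, B w z = B w y := by
    intro w hw
    have h1 := LinearMap.BilinForm.apply_toDual_symm_apply
      (B := B.restrict (W i)) (hB := hndres) φ ⟨w, hw⟩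
    have h2 : B z w = B w y := h1
    rw [hsymm]; exact h2
  -- `z` is fixed by `Hs 0`
  have hKz : ∀ k ∈ Hs 0, k z = z := by
    intro k hk
    have hkH : k ∈ H := hHsle 0 hk
    have hki : k⁻¹ ∈ Hs 0 := (Hs 0).inv_mem hk
    have hkiH : k⁻¹ ∈ H := hHsle 0 hki
    have hkz : k z ∈ W i := hK1 k hk z hzW
    have key : ∀ u ∈ W i, B (k z - z) u = 0 := by
      intro u hu
      have hmem : k⁻¹ u ∈ W i := hinv i k⁻¹ hkiH u hu
      have e1 : B u (k z) = B (k⁻¹ u) z := by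
        have h1 : k (k⁻¹ u) = u := k.apply_symm_apply u
        have h2 : B (k (k⁻¹ u)) (k z) = B (k⁻¹ u) z := hH hkH _ _
        rw [h1] at h2; exact h2
      have e2 : B (k⁻¹ u) z = B (k⁻¹ u) y := hz _ hmem
      have e3 : B (k⁻¹ u) y = B u y := by
        conv_lhs => rw [← hKfix k⁻¹ hki y hy]
        exact hH hkiH u y
      have e4 : B u z = B u y := hz u hu
      rw [hsymm, map_sub, e1, e2, e3, e4, sub_self]
    have : k z - z = 0 := hWnd _ (sub_mem hkz hzW) key
    exact sub_eq_zero.mp this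
  -- hence `z` is fixed by all of `H`
  have hHz : ∀ h ∈ H, h z = z := by
    intro h hh
    obtain ⟨f, hf, -⟩ := hprod h hh
    have hlist : (List.ofFn fun a : Fin 2 => ((f a : V ≃ₗ[ℝ] V))).prod
        = (f 0 : V ≃ₗ[ℝ] V) * (f 1 : V ≃ₗ[ℝ] V) := by
      simp [List.ofFn_succ]
    rw [hf, hlist]
    have happ : ((f 0 : V ≃ₗ[ℝ] V) * (f 1 : V ≃ₗ[ℝ] V)) z
        = (f 0 : V ≃ₗ[ℝ] V) ((f 1 : V ≃ₗ[ℝ] V) z) := rfl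
    rw [happ, hK'1 (f 1) (f 1).2 z hzW, hKz (f 0) (f 0).2]
  have hzfix : z ∈ fixedSubspace H ⊤ := ⟨trivial, hHz⟩
  have hz0 : z = 0 := (Submodule.mem_bot ℝ).mp (hdisjF.le_bot ⟨hzfix, hzW⟩)
  have := hz x hx
  rw [hz0, map_zero] at this
  exact this.symm
end

section
/- Let H be a subgroup of O(V) and let V = N¹ ⊕ ⋯ ⊕ N^q be a direct-sum decomposition into H-invariant subspaces such that H is the internal direct product of normal subgroups G¹, …, G^q, where each G^j maps N^j into itself and acts as the identity on N^k for every k ≠ j. If M is an H-invariant subspace of V with S(M,H) ≠ 0, then M ∩ N^j ≠ 0 for some j with 1 ≤ j ≤ q. -/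
/-- Given a direct-sum decomposition `V = N¹ ⊕ ⋯ ⊕ N^q` into `H`-invariant
subspaces, with `H` the internal direct product of normal subgroups `G¹, …, G^q` where each
`G^j` maps `N^j` into itself and acts as the identity on `N^k` for `k ≠ j`: if `M` is an
`H`-invariant subspace with `S(M,H) ≠ 0`, then `M ∩ N^j ≠ 0` for some `j`. -/
theorem inf_ne_bot_of_movedSpan_ne_bot
    {V : Type*} [AddCommGroup V] [Module ℝ V] [FiniteDimensional ℝ V]
    (B : LinearMap.BilinForm ℝ V)
    (hsymm : ∀ x y : V, B x y = B y x) (hnd : NondegOn B ⊤)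
    (H : Subgroup (V ≃ₗ[ℝ] V)) (hH : H ≤ orthogonalGroup B)
    (q : ℕ) (N : Fin q → Submodule ℝ V)
    (hNind : iSupIndep N) (hNsup : iSup N = ⊤)
    (hNinv : ∀ j, InvariantUnder H (N j))
    (Gs : Fin q → Subgroup (V ≃ₗ[ℝ] V))
    (hGs : IsInternalDirectProduct H Gs)
    (hGact : ∀ j, (∀ g ∈ Gs j, ∀ x ∈ N j, g x ∈ N j) ∧
      (∀ k, k ≠ j → ∀ g ∈ Gs j, ∀ x ∈ N k, g x = x))
    (M : Submodule ℝ V) (hMinv : InvariantUnder H M)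
    (hMS : movedSpan H M ≠ ⊥) :
    ∃ j, M ⊓ N j ≠ ⊥ := by
  by_contra hcon
  push_neg at hcon
  -- Step 1: every element of each factor Gs j fixes M pointwise
  have key : ∀ j, ∀ g ∈ Gs j, ∀ m ∈ M, g m = m := by
    intro j g hg m hm
    have hgH : g ∈ H := (hGs.1 j) hg
    have hmem : m - g m ∈ N j := by
      have hm' : m ∈ ⨆ i, N i := by rw [hNsup]; exact Submodule.mem_top
      refine Submodule.iSup_induction (motive := fun v => v - g v ∈ N j) N hm' ?_ ?_ ?_
      · intro k x hx
        by_cases hkj : k = j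
        · subst hkj
          exact (N k).sub_mem hx ((hGact k).1 g hg x hx)
        · rw [(hGact j).2 k hkj g hg x hx, sub_self]
          exact (N j).zero_mem
      · show (0:V) - g 0 ∈ N j
        rw [map_zero, sub_self]; exact (N j).zero_mem
      · intro x y hx hy
        show (x + y) - g (x + y) ∈ N j
        have : (x + y) - g (x + y) = (x - g x) + (y - g y) := by
          rw [map_add]; abel
        rw [this]
        exact (N j).add_mem hx hy
    have hmemM : m - g m ∈ M := M.sub_mem hm (hMinv g hgH m hm)
    have : m - g m ∈ M ⊓ N j := ⟨hmemM, hmem⟩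
    rw [hcon j] at this
    exact (sub_eq_zero.mp ((Submodule.mem_bot ℝ).mp this)).symm
  -- Step 2: products of fixing elements fix
  have prodfix : ∀ (m : V), ∀ L : List (V ≃ₗ[ℝ] V), (∀ g ∈ L, g m = m) → L.prod m = m := by
    intro m L
    induction L with
    | nil => intro _; rfl
    | cons a L ih =>
      intro hL
      have : (a :: L).prod = a * L.prod := List.prod_cons
      rw [this]
      have h1 : (a * L.prod) m = a (L.prod m) := rfl
      rw [h1, ih (fun g hg => hL g (List.mem_cons_of_mem a hg)), hL a (List.mem_cons_self (a := a) (l := L))]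
  -- Step 3: every element of H fixes M pointwise
  have hfix : ∀ h ∈ H, ∀ m ∈ M, h m = m := by
    intro h hh m hm
    obtain ⟨f, hf, -⟩ := hGs.2.2.2 h hh
    rw [hf]
    refine prodfix m _ ?_
    intro g hg
    rw [List.mem_ofFn] at hg
    obtain ⟨i, rfl⟩ := hg
    exact key i (f i) (f i).2 m hm
  -- Step 4: movedSpan = ⊥, contradiction
  apply hMS
  rw [movedSpan, Submodule.span_eq_bot]
  rintro x ⟨w, hw, g, hg, rfl⟩
  rw [hfix g hg w hw, sub_self]
end

section
/- Let H be a subgroup of O(V) with the Borel–Lichnerowicz splitting property. Let V = M¹ ⊕ ⋯ ⊕ M^p and V = N¹ ⊕ ⋯ ⊕ N^q be two direct-sum decompositions of V into mutually orthogonal nondegenerate H-invariant subspaces. Assume that M¹ and N¹ each admit no nontrivial decomposition into H-invariant subspaces and that M¹ ∩ N¹ ≠ 0. Then M¹ ∩ (N² ⊕ ⋯ ⊕ N^q) = 0 and N¹ ∩ (M² ⊕ ⋯ ⊕ M^p) = 0. -/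
section Aux

variable {V : Type*} [AddCommGroup V] [Module ℝ V]

/-- The projection onto `P` along `P'`, as an endomorphism of `V`. -/
noncomputable def projOf (P P' : Submodule ℝ V) (hP : IsCompl P P') : V →ₗ[ℝ] V :=
  P.subtype ∘ₗ P.linearProjOfIsCompl P' hP

lemma projOf_mem (P P' : Submodule ℝ V) (hP : IsCompl P P') (x : V) :
    projOf P P' hP x ∈ P := (P.linearProjOfIsCompl P' hP x).2

lemma projOf_apply_left (P P' : Submodule ℝ V) (hP : IsCompl P P') {x : V} (hx : x ∈ P) :
    projOf P P' hP x = x := by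
  exact congrArg Subtype.val (Submodule.projectionOnto_apply_left hP ⟨x, hx⟩)

lemma projOf_apply_right (P P' : Submodule ℝ V) (hP : IsCompl P P') {x : V} (hx : x ∈ P') :
    projOf P P' hP x = 0 := by
  show (P.subtype) (P.projectionOnto P' hP x) = 0
  rw [Submodule.projectionOnto_apply_of_mem_right hP hx, map_zero]

lemma projOf_sub_mem (P P' : Submodule ℝ V) (hP : IsCompl P P') (x : V) :
    x - projOf P P' hP x ∈ P' := by
  have hx : x ∈ P ⊔ P' := by rw [hP.sup_eq_top]; trivial
  obtain ⟨a, ha, b, hb, hab⟩ := Submodule.mem_sup.mp hx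
  have hπ : projOf P P' hP x = a := by
    rw [← hab, map_add, projOf_apply_left P P' hP ha, projOf_apply_right P P' hP hb, add_zero]
  rw [hπ, ← hab]
  simpa using hb

lemma projOf_comm (H : Subgroup (V ≃ₗ[ℝ] V)) (P P' : Submodule ℝ V) (hP : IsCompl P P')
    (hPi : InvariantUnder H P) (hP'i : InvariantUnder H P')
    {g : V ≃ₗ[ℝ] V} (hg : g ∈ H) (v : V) :
    projOf P P' hP (g v) = g (projOf P P' hP v) := by
  have hgv : g v = g (projOf P P' hP v) + g (v - projOf P P' hP v) := by
    rw [← map_add]; congr 1; abel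
  rw [hgv, map_add, projOf_apply_left P P' hP (hPi g hg _ (projOf_mem P P' hP v)),
    projOf_apply_right P P' hP (hP'i g hg _ (projOf_sub_mem P P' hP v)), add_zero]

lemma invariantUnder_iSup {ι : Sort*} (H : Subgroup (V ≃ₗ[ℝ] V)) (f : ι → Submodule ℝ V)
    (hf : ∀ i, InvariantUnder H (f i)) : InvariantUnder H (⨆ i, f i) := by
  intro g hg w hw
  have hle : (⨆ i, f i).map (g : V →ₗ[ℝ] V) ≤ ⨆ i, f i := by
    rw [Submodule.map_iSup]
    exact iSup_mono fun i => Submodule.map_le_iff_le_comap.mpr fun x hx => hf i g hg x hx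
  exact hle ⟨w, hw, rfl⟩

lemma isCompl_first {k : ℕ} (f : Fin (k + 1) → Submodule ℝ V)
    (hind : iSupIndep f) (hsup : iSup f = ⊤) :
    IsCompl (f 0) (⨆ i : Fin k, f i.succ) := by
  constructor
  · exact (hind 0).mono_right
      (iSup_le fun i => le_iSup₂_of_le i.succ (Fin.succ_ne_zero i) le_rfl)
  · rw [codisjoint_iff, ← hsup]
    refine le_antisymm (sup_le (le_iSup f 0) (iSup_le fun i => le_iSup f i.succ))
      (iSup_le fun i => ?_)
    refine Fin.cases le_sup_left (fun j => ?_) i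
    exact le_trans (le_iSup (fun j : Fin k => f j.succ) j) le_sup_right

/-- Key lemma: if `V = A ⊕ A' = C ⊕ C'` with all four subspaces `H`-invariant,
`A` admits no nontrivial `H`-invariant decomposition and `A ⊓ C ≠ ⊥`, then `A ⊓ C' = ⊥`. -/
lemma key_inf_eq_bot [FiniteDimensional ℝ V]
    (H : Subgroup (V ≃ₗ[ℝ] V)) (A A' C C' : Submodule ℝ V)
    (hA : IsCompl A A') (hC : IsCompl C C')
    (hAi : InvariantUnder H A) (hA'i : InvariantUnder H A')
    (hCi : InvariantUnder H C) (hC'i : InvariantUnder H C')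
    (hdec : NoNontrivialDecomp H A) (hz : A ⊓ C ≠ ⊥) : A ⊓ C' = ⊥ := by
  set f : V →ₗ[ℝ] V := projOf A A' hA ∘ₗ projOf C C' hC with hf
  have hfA : ∀ x : V, f x ∈ A := fun x => projOf_mem A A' hA _
  -- equivariance of f and its powers
  have hfcomm : ∀ g ∈ H, ∀ v : V, f (g v) = g (f v) := by
    intro g hg v
    show projOf A A' hA (projOf C C' hC (g v)) = g (projOf A A' hA (projOf C C' hC v))
    rw [projOf_comm H C C' hC hCi hC'i hg, projOf_comm H A A' hA hAi hA'i hg]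
  have hfkcomm : ∀ (n : ℕ), ∀ g ∈ H, ∀ v : V, (f ^ n) (g v) = g ((f ^ n) v) := by
    intro n
    induction n with
    | zero => intro g hg v; simp
    | succ m ih =>
      intro g hg v
      rw [pow_succ, Module.End.mul_apply, Module.End.mul_apply, hfcomm g hg, ih g hg]
  -- the restriction of f to A
  set e : ↥A →ₗ[ℝ] ↥A := f.restrict (fun x _ => hfA x) with he
  have hek : ∀ (n : ℕ) (x : ↥A), ((e ^ n) x : V) = (f ^ n) (x : V) := by
    intro n
    induction n with
    | zero => intro x; simp
    | succ m ih =>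
      intro x
      rw [pow_succ, pow_succ, Module.End.mul_apply, Module.End.mul_apply, ih,
        LinearMap.restrict_apply]
  -- Fitting decomposition
  obtain ⟨k, hcompl, hk1⟩ :=
    ((LinearMap.eventually_isCompl_ker_pow_range_pow e).and
      (Filter.eventually_ge_atTop 1)).exists
  set U1 : Submodule ℝ V := A ⊓ LinearMap.ker (f ^ k) with hU1
  set U2 : Submodule ℝ V := Submodule.map (f ^ k) A with hU2
  have h1 : U1 = (LinearMap.ker (e ^ k)).map A.subtype := by
    ext x
    simp only [hU1, Submodule.mem_inf, Submodule.mem_map, LinearMap.mem_ker]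
    constructor
    · rintro ⟨hxA, hxk⟩
      exact ⟨⟨x, hxA⟩, Subtype.ext (by rw [hek]; exact hxk), rfl⟩
    · rintro ⟨y, hy, rfl⟩
      refine ⟨y.2, ?_⟩
      show (f ^ k) (y : V) = 0
      rw [← hek k y, hy, Submodule.coe_zero]
  have h2 : U2 = (LinearMap.range (e ^ k)).map A.subtype := by
    ext x
    constructor
    · rintro ⟨y, hy, rfl⟩
      exact ⟨(e ^ k) ⟨y, hy⟩, ⟨⟨y, hy⟩, rfl⟩, (hek k ⟨y, hy⟩)⟩
    · rintro ⟨y, ⟨w, rfl⟩, rfl⟩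
      exact ⟨(w : V), w.2, (hek k w).symm⟩
  have hsup : U1 ⊔ U2 = A := by
    rw [h1, h2, ← Submodule.map_sup, hcompl.sup_eq_top, Submodule.map_top,
      Submodule.range_subtype]
  have hinf : U1 ⊓ U2 = ⊥ := by
    rw [h1, h2, ← Submodule.map_inf A.subtype Subtype.val_injective, hcompl.inf_eq_bot,
      Submodule.map_bot]
  have hinv1 : InvariantUnder H U1 := by
    intro g hg w hw
    have hwA : w ∈ A := hw.1
    have hwk : (f ^ k) w = 0 := LinearMap.mem_ker.mp hw.2
    exact ⟨hAi g hg w hwA, LinearMap.mem_ker.mpr (by rw [hfkcomm k g hg, hwk, map_zero])⟩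
  have hinv2 : InvariantUnder H U2 := by
    intro g hg w hw
    obtain ⟨y, hy, rfl⟩ := Submodule.mem_map.mp hw
    exact Submodule.mem_map.mpr ⟨g y, hAi g hg y hy, hfkcomm k g hg y⟩
  rcases hdec U1 U2 hsup hinf hinv1 hinv2 with hb1 | hb2
  · -- U1 = ⊥ : conclude A ⊓ C' ≤ U1 = ⊥
    refine le_bot_iff.mp ?_
    rw [← hb1]
    intro x hx
    have hxA : x ∈ A := hx.1
    have hxC' : x ∈ C' := hx.2
    refine ⟨hxA, LinearMap.mem_ker.mpr ?_⟩
    have hfx : f x = 0 := by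
      show projOf A A' hA (projOf C C' hC x) = 0
      rw [projOf_apply_right C C' hC hxC', map_zero]
    obtain ⟨m, rfl⟩ := Nat.exists_eq_add_of_le hk1
    rw [add_comm, pow_succ, Module.End.mul_apply, hfx, map_zero]
  · -- U2 = ⊥ : contradiction with A ⊓ C ≠ ⊥
    exfalso
    obtain ⟨z, hzmem, hz0⟩ := Submodule.exists_mem_ne_zero_of_ne_bot hz
    have hfz : f z = z := by
      show projOf A A' hA (projOf C C' hC z) = z
      rw [projOf_apply_left C C' hC hzmem.2, projOf_apply_left A A' hA hzmem.1]
    have hfkz : ∀ n : ℕ, (f ^ n) z = z := by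
      intro n
      induction n with
      | zero => simp
      | succ m ih => rw [pow_succ, Module.End.mul_apply, hfz, ih]
    have : z ∈ U2 := ⟨z, hzmem.1, hfkz k⟩
    rw [hb2] at this
    exact hz0 this

end Aux

/-- Two direct-sum decompositions `V = M¹ ⊕ ⋯ ⊕ M^{p+1}` and
`V = N¹ ⊕ ⋯ ⊕ N^{q+1}` into mutually orthogonal nondegenerate `H`-invariant subspaces
(here indexed by `Fin (p+1)` and `Fin (q+1)`, with `M 0` and `N 0` playing the roles of
`M¹` and `N¹`). If `M 0` and `N 0` each admit no nontrivial decomposition into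
`H`-invariant subspaces and `M 0 ∩ N 0 ≠ 0`, then
`M 0 ∩ (N² ⊕ ⋯) = 0` and `N 0 ∩ (M² ⊕ ⋯) = 0`. -/
theorem first_summand_meets_only_first
    {V : Type*} [AddCommGroup V] [Module ℝ V] [FiniteDimensional ℝ V]
    (B : LinearMap.BilinForm ℝ V)
    (hsymm : ∀ x y : V, B x y = B y x) (hnd : NondegOn B ⊤)
    (H : Subgroup (V ≃ₗ[ℝ] V)) (hH : H ≤ orthogonalGroup B)
    (hBL : BorelLichnerowicz B H)
    (p q : ℕ) (M : Fin (p + 1) → Submodule ℝ V) (N : Fin (q + 1) → Submodule ℝ V)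
    (hMind : iSupIndep M) (hMsup : iSup M = ⊤)
    (hMorth : ∀ i j, i ≠ j → ∀ x ∈ M i, ∀ y ∈ M j, B x y = 0)
    (hMnd : ∀ i, NondegOn B (M i)) (hMinv : ∀ i, InvariantUnder H (M i))
    (hNind : iSupIndep N) (hNsup : iSup N = ⊤)
    (hNorth : ∀ i j, i ≠ j → ∀ x ∈ N i, ∀ y ∈ N j, B x y = 0)
    (hNnd : ∀ i, NondegOn B (N i)) (hNinv : ∀ i, InvariantUnder H (N i))
    (hM0 : NoNontrivialDecomp H (M 0)) (hN0 : NoNontrivialDecomp H (N 0))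
    (hMN : M 0 ⊓ N 0 ≠ ⊥) :
    M 0 ⊓ (⨆ j : Fin q, N j.succ) = ⊥ ∧ N 0 ⊓ (⨆ i : Fin p, M i.succ) = ⊥ := by
  have hMcompl := isCompl_first M hMind hMsup
  have hNcompl := isCompl_first N hNind hNsup
  have hMinv' : InvariantUnder H (⨆ i : Fin p, M i.succ) :=
    invariantUnder_iSup H _ (fun i => hMinv i.succ)
  have hNinv' : InvariantUnder H (⨆ j : Fin q, N j.succ) :=
    invariantUnder_iSup H _ (fun j => hNinv j.succ)
  constructor
  · exact key_inf_eq_bot H (M 0) (⨆ i : Fin p, M i.succ) (N 0) (⨆ j : Fin q, N j.succ)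
      hMcompl hNcompl (hMinv 0) hMinv' (hNinv 0) hNinv' hM0 hMN
  · exact key_inf_eq_bot H (N 0) (⨆ j : Fin q, N j.succ) (M 0) (⨆ i : Fin p, M i.succ)
      hNcompl hMcompl (hNinv 0) hNinv' (hMinv 0) hMinv' hN0 (by rwa [inf_comm] at hMN)
end

section
/- Let H be a subgroup of O(V) with the Borel–Lichnerowicz splitting property and with V^H totally isotropic. Let V = M¹ ⊕ ⋯ ⊕ M^p and V = N¹ ⊕ ⋯ ⊕ N^q be two direct-sum decompositions of V into mutually orthogonal nondegenerate H-invariant subspaces, and assume M¹ ∩ (N² ⊕ ⋯ ⊕ N^q) = 0 and N¹ ∩ (M² ⊕ ⋯ ⊕ M^p) = 0. Let π₁ : M¹ → N¹ be the projection onto N¹ determined by the decomposition V = N¹ ⊕ (N² ⊕ ⋯ ⊕ N^q). Then: (1) π₁ is injective and dim M¹ = dim N¹, so π₁ is a linear bijection of M¹ onto N¹; (2) x − π₁(x) ∈ V^H for every x ∈ M¹; (3) ⟨π₁(x), π₁(x)⟩ = ⟨x,x⟩ for every x ∈ M¹; and (4) S(M¹,H) = S(N¹,H). -/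
lemma listProd_fix_aux {V : Type*} [AddCommGroup V] [Module ℝ V] (r : V) :
    ∀ l : List (V ≃ₗ[ℝ] V), (∀ g ∈ l, g r = r) → l.prod r = r := by
  intro l
  induction l with
  | nil => intro _; rfl
  | cons a t ih =>
      intro h
      rw [List.prod_cons]
      have h1 : (a * t.prod) r = a (t.prod r) := rfl
      rw [h1, ih (fun g hg => h g (List.mem_cons_of_mem a hg)), h a List.mem_cons_self]

lemma key_fixed_aux {V : Type*} [AddCommGroup V] [Module ℝ V]
    (B : LinearMap.BilinForm ℝ V) (H : Subgroup (V ≃ₗ[ℝ] V))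
    (hBL : BorelLichnerowicz B H)
    (q : ℕ) (N : Fin (q + 1) → Submodule ℝ V)
    (hNind : iSupIndep N)
    (hNsup : iSup N = ⊤)
    (hNorth : ∀ i j, i ≠ j → ∀ x ∈ N i, ∀ y ∈ N j, B x y = 0)
    (hNinv : ∀ i, InvariantUnder H (N i))
    (hNnd : ∀ i, NondegOn B (N i))
    (W : Submodule ℝ V) (hWinv : InvariantUnder H W)
    (hWN : W ⊓ (⨆ j : Fin q, N j.succ) = ⊥) :
    ∀ x ∈ W, ∀ n ∈ N 0, ∀ r ∈ (⨆ j : Fin q, N j.succ),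
      x = n + r → r ∈ fixedSubspace H ⊤ := by
  intro x hx n hn r hr hxnr
  set R : Submodule ℝ V := ⨆ j : Fin q, N j.succ with hR
  set U : Fin (q + 1 + 1) → Submodule ℝ V := Fin.cases ⊥ N with hU
  have hU0 : U 0 = ⊥ := rfl
  have hUs : ∀ i : Fin (q + 1), U i.succ = N i := fun i => by simp [hU]
  -- independence
  have h1 : iSupIndep U := by
    intro i
    have hle : (⨆ (j) (_ : j ≠ i), U j) ≤ ⨆ (j : Fin (q+1)) (_ : j.succ ≠ i), N j := by
      refine iSup_le fun j => iSup_le fun hj => ?_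
      induction j using Fin.cases with
      | zero => rw [hU0]; exact bot_le
      | succ j' =>
          rw [hUs]
          exact le_iSup_of_le j' (le_iSup_of_le hj le_rfl)
    induction i using Fin.cases with
    | zero => rw [hU0]; exact disjoint_bot_left
    | succ i' =>
        rw [hUs]
        refine (hNind i').mono_right (hle.trans ?_)
        refine iSup_le fun j => iSup_le fun hj => ?_
        have : j ≠ i' := fun h => hj (by rw [h])
        exact le_iSup_of_le j (le_iSup_of_le this le_rfl)
  -- supremum
  have h2 : iSup U = ⊤ := by
    rw [← top_le_iff, ← hNsup]
    exact iSup_le fun i => by rw [← hUs i]; exact le_iSup U i.succ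
  -- orthogonality
  have h3 : ∀ i j, i ≠ j → ∀ a ∈ U i, ∀ b ∈ U j, B a b = 0 := by
    intro i j hij a ha b hb
    induction i using Fin.cases with
    | zero =>
        rw [hU0, Submodule.mem_bot] at ha
        simp [ha]
    | succ i' =>
        induction j using Fin.cases with
        | zero =>
            rw [hU0, Submodule.mem_bot] at hb
            simp [hb]
        | succ j' =>
            rw [hUs] at ha hb
            refine hNorth i' j' (fun h => hij (by rw [h])) a ha b hb
  -- invariance
  have h4 : ∀ i, InvariantUnder H (U i) := by
    intro i
    induction i using Fin.cases with
    | zero =>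
        intro g hg w hw
        rw [hU0, Submodule.mem_bot] at hw ⊢
        rw [hw]; exact map_zero _
    | succ i' =>
        rw [hUs]; exact hNinv i'
  have h5 : U 0 ≤ fixedSubspace H ⊤ := by rw [hU0]; exact bot_le
  have h6 : ∀ i : Fin (q + 1), NondegOn B (U i.succ) := fun i => by rw [hUs]; exact hNnd i
  obtain ⟨Hs, ⟨hHsle, _, _, hprod⟩, hact⟩ := hBL (q + 1) U h1 h2 h3 h4 h5 h6
  -- each generator fixes r
  have hgen : ∀ i : Fin (q + 1), ∀ g ∈ Hs i, g r = r := by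
    intro i g hg
    by_cases hi : i = 0
    · -- g is identity on every N j.succ, hence on R
      subst hi
      have hfix : ∀ j : Fin q, ∀ v ∈ N j.succ, g v = v := by
        intro j v hv
        have hne : (j.succ.succ : Fin (q+1+1)) ≠ (0 : Fin (q+1)).succ := by
          intro h
          exact (Fin.succ_ne_zero j) (Fin.succ_injective _ h)
        have := (hact 0).2 j.succ.succ hne g hg v (by rw [hUs]; exact hv)
        exact this
      have hRle : R ≤ LinearMap.eqLocus (g : V →ₗ[ℝ] V) LinearMap.id := by
        refine iSup_le fun j => fun v hv => ?_
        exact LinearMap.mem_eqLocus.2 (hfix j v hv)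
      exact LinearMap.mem_eqLocus.1 (hRle hr)
    · -- g fixes N 0 and maps R into R
      have hgn : g n = n := by
        have hne : ((0 : Fin (q+1)).succ : Fin (q+1+1)) ≠ i.succ := by
          intro h
          exact hi (Fin.succ_injective _ h).symm
        exact (hact i).2 (0 : Fin (q+1)).succ hne g hg n (by rw [hUs]; exact hn)
      have hNiR : N i ≤ R := by
        obtain ⟨i', rfl⟩ := Fin.exists_succ_eq.2 hi
        exact le_iSup (fun j : Fin q => N j.succ) i'
      have hgR : g r ∈ R := by
        have hRle : R ≤ Submodule.comap (g : V →ₗ[ℝ] V) R := by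
          refine iSup_le fun j => fun v hv => ?_
          refine Submodule.mem_comap.2 ?_
          simp only [LinearEquiv.coe_coe]
          by_cases hji : j.succ = i
          · subst hji
            have h' := (hact j.succ).1 g hg v (by rw [hUs]; exact hv)
            rw [hUs] at h'
            exact hNiR h'
          · have hne : (j.succ.succ : Fin (q+1+1)) ≠ i.succ := by
              intro h
              exact hji (Fin.succ_injective _ h)
            have h' := (hact i).2 j.succ.succ hne g hg v (by rw [hUs]; exact hv)
            rw [h']
            exact le_iSup (fun j : Fin q => N j.succ) j hv
        exact hRle hr
      have hgH : g ∈ H := hHsle i hg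
      have hgx : g x ∈ W := hWinv g hgH x hx
      have hdiff : x - g x ∈ W ⊓ R := by
        constructor
        · exact W.sub_mem hx hgx
        · have : x - g x = r - g r := by
            rw [hxnr, map_add, hgn]
            abel
          rw [this]
          exact R.sub_mem hr hgR
      rw [hWN, Submodule.mem_bot, sub_eq_zero] at hdiff
      have hfin : n + g r = n + r := by
        have h' : g (n + r) = n + r := by rw [← hxnr, ← hdiff]
        rw [map_add, hgn] at h'
        exact h'
      exact add_left_cancel hfin
  -- every element of H fixes r
  refine ⟨Submodule.mem_top, fun h hh => ?_⟩
  obtain ⟨f, hf, -⟩ := hprod h hh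
  rw [hf]
  refine listProd_fix_aux r _ fun g hg => ?_
  rw [List.mem_ofFn] at hg
  obtain ⟨i, rfl⟩ := hg
  exact hgen i (f i) (f i).2

lemma movedSpan_le_aux {V : Type*} [AddCommGroup V] [Module ℝ V]
    (H : Subgroup (V ≃ₗ[ℝ] V)) (W N0 : Submodule ℝ V)
    (hdec : ∀ w ∈ W, ∃ n ∈ N0, ∃ r ∈ fixedSubspace H ⊤, w = n + r) :
    movedSpan H W ≤ movedSpan H N0 := by
  refine Submodule.span_le.2 ?_
  rintro _ ⟨w, hw, g, hg, rfl⟩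
  obtain ⟨n, hn, r, hrfix, rfl⟩ := hdec w hw
  have hgr : g r = r := hrfix.2 g hg
  have h1 : n + r - g (n + r) = n - g n := by rw [map_add, hgr]; abel
  rw [h1]
  exact Submodule.subset_span ⟨n, hn, g, hg, rfl⟩

/-- With `V^H` totally isotropic and two decompositions as in the paper,
if `M 0 ∩ (N² ⊕ ⋯) = 0` and `N 0 ∩ (M² ⊕ ⋯) = 0`, then the projection
`π₁ : M 0 → N 0` along `N² ⊕ ⋯` is an injective, dimension-preserving bijection,
`x - π₁ x ∈ V^H`, `π₁` preserves the form on the diagonal, and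
`S(M 0, H) = S(N 0, H)`. -/
theorem projection_onto_first_summand
    {V : Type*} [AddCommGroup V] [Module ℝ V] [FiniteDimensional ℝ V]
    (B : LinearMap.BilinForm ℝ V)
    (hsymm : ∀ x y : V, B x y = B y x) (hnd : NondegOn B ⊤)
    (H : Subgroup (V ≃ₗ[ℝ] V)) (hH : H ≤ orthogonalGroup B)
    (hBL : BorelLichnerowicz B H)
    (hiso : TotallyIsotropic B (fixedSubspace H ⊤))
    (p q : ℕ) (M : Fin (p + 1) → Submodule ℝ V) (N : Fin (q + 1) → Submodule ℝ V)
    (hMind : iSupIndep M) (hMsup : iSup M = ⊤)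
    (hMorth : ∀ i j, i ≠ j → ∀ x ∈ M i, ∀ y ∈ M j, B x y = 0)
    (hMnd : ∀ i, NondegOn B (M i)) (hMinv : ∀ i, InvariantUnder H (M i))
    (hNind : iSupIndep N) (hNsup : iSup N = ⊤)
    (hNorth : ∀ i j, i ≠ j → ∀ x ∈ N i, ∀ y ∈ N j, B x y = 0)
    (hNnd : ∀ i, NondegOn B (N i)) (hNinv : ∀ i, InvariantUnder H (N i))
    (hMN : M 0 ⊓ (⨆ j : Fin q, N j.succ) = ⊥)
    (hNM : N 0 ⊓ (⨆ i : Fin p, M i.succ) = ⊥) :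
    ∃ π : ↥(M 0) →ₗ[ℝ] ↥(N 0),
      (∀ x : ↥(M 0), (x : V) - (π x : V) ∈ ⨆ j : Fin q, N j.succ) ∧
      Function.Injective π ∧
      Module.finrank ℝ ↥(M 0) = Module.finrank ℝ ↥(N 0) ∧
      Function.Bijective π ∧
      (∀ x : ↥(M 0), (x : V) - (π x : V) ∈ fixedSubspace H ⊤) ∧
      (∀ x : ↥(M 0), B (π x) (π x) = B x x) ∧
      movedSpan H (M 0) = movedSpan H (N 0) := by
  classical
  set R : Submodule ℝ V := ⨆ j : Fin q, N j.succ with hRdef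
  set R' : Submodule ℝ V := ⨆ i : Fin p, M i.succ with hR'def
  -- complements
  have hcompl : IsCompl (N 0) R := by
    constructor
    · refine (hNind 0).mono_right ?_
      exact iSup_le fun j => le_iSup_of_le j.succ (le_iSup_of_le (Fin.succ_ne_zero j) le_rfl)
    · rw [codisjoint_iff, ← top_le_iff, ← hNsup]
      refine iSup_le fun i => ?_
      induction i using Fin.cases with
      | zero => exact le_sup_left
      | succ j => exact le_sup_of_le_right (le_iSup (fun j : Fin q => N j.succ) j)
  have hcomplM : IsCompl (M 0) R' := by
    constructor
    · refine (hMind 0).mono_right ?_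
      exact iSup_le fun j => le_iSup_of_le j.succ (le_iSup_of_le (Fin.succ_ne_zero j) le_rfl)
    · rw [codisjoint_iff, ← top_le_iff, ← hMsup]
      refine iSup_le fun i => ?_
      induction i using Fin.cases with
      | zero => exact le_sup_left
      | succ j => exact le_sup_of_le_right (le_iSup (fun j : Fin p => M j.succ) j)
  set π : ↥(M 0) →ₗ[ℝ] ↥(N 0) :=
    (Submodule.projectionOnto (N 0) R hcompl).comp (M 0).subtype with hπdef
  set π' : ↥(N 0) →ₗ[ℝ] ↥(M 0) :=
    (Submodule.projectionOnto (M 0) R' hcomplM).comp (N 0).subtype with hπ'def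
  have hπdiff : ∀ x : ↥(M 0), (x : V) - (π x : V) ∈ R := by
    intro x
    have h := Submodule.projection_add_projection_eq_self hcompl (x : V)
    have h2 : (x : V) - (π x : V) = ((R.projectionOnto (N 0) hcompl.symm) (x : V) : V) :=
      sub_eq_of_eq_add' h.symm
    rw [h2]
    exact Submodule.coe_mem _
  have hπ'diff : ∀ x : ↥(N 0), (x : V) - (π' x : V) ∈ R' := by
    intro x
    have h := Submodule.projection_add_projection_eq_self hcomplM (x : V)
    have h2 : (x : V) - (π' x : V) = ((R'.projectionOnto (M 0) hcomplM.symm) (x : V) : V) :=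
      sub_eq_of_eq_add' h.symm
    rw [h2]
    exact Submodule.coe_mem _
  -- fixedness via the key lemma
  have hkey := key_fixed_aux B H hBL q N hNind hNsup hNorth hNinv hNnd (M 0) (hMinv 0) hMN
  have hkey' := key_fixed_aux B H hBL p M hMind hMsup hMorth hMinv hMnd (N 0) (hNinv 0) hNM
  have hfix : ∀ x : ↥(M 0), (x : V) - (π x : V) ∈ fixedSubspace H ⊤ := by
    intro x
    exact hkey (x : V) x.2 (π x) (π x).2 ((x : V) - (π x : V)) (hπdiff x) (by abel)
  have hfix' : ∀ x : ↥(N 0), (x : V) - (π' x : V) ∈ fixedSubspace H ⊤ := by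
    intro x
    exact hkey' (x : V) x.2 (π' x) (π' x).2 ((x : V) - (π' x : V)) (hπ'diff x) (by abel)
  -- injectivity
  have hinj : Function.Injective π := by
    rw [← LinearMap.ker_eq_bot]
    refine (Submodule.eq_bot_iff _).2 fun x hx => ?_
    have hx0 : π x = 0 := hx
    have hxR : (x : V) ∈ R := by
      have h := hπdiff x
      rw [hx0] at h
      simpa using h
    have hmem : (x : V) ∈ M 0 ⊓ R := ⟨x.2, hxR⟩
    rw [hMN, Submodule.mem_bot] at hmem
    exact Subtype.ext hmem
  have hinj' : Function.Injective π' := by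
    rw [← LinearMap.ker_eq_bot]
    refine (Submodule.eq_bot_iff _).2 fun x hx => ?_
    have hx0 : π' x = 0 := hx
    have hxR : (x : V) ∈ R' := by
      have h := hπ'diff x
      rw [hx0] at h
      simpa using h
    have hmem : (x : V) ∈ N 0 ⊓ R' := ⟨x.2, hxR⟩
    rw [hNM, Submodule.mem_bot] at hmem
    exact Subtype.ext hmem
  have hrank : Module.finrank ℝ ↥(M 0) = Module.finrank ℝ ↥(N 0) :=
    le_antisymm (LinearMap.finrank_le_finrank_of_injective hinj)
      (LinearMap.finrank_le_finrank_of_injective hinj')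
  have hsurj : Function.Surjective π :=
    (LinearMap.injective_iff_surjective_of_finrank_eq_finrank hrank).1 hinj
  -- orthogonality of N 0 and R
  have horthNR : ∀ a ∈ N 0, ∀ b ∈ R, B a b = 0 := by
    intro a ha b hb
    have hle : R ≤ LinearMap.ker (B a) :=
      iSup_le fun j => fun v hv =>
        LinearMap.mem_ker.2 (hNorth 0 j.succ (Fin.succ_ne_zero j).symm a ha v hv)
    exact hle hb
  have hBeq : ∀ x : ↥(M 0), B (π x) (π x) = B x x := by
    intro x
    have hxd : (x : V) = (π x : V) + ((x : V) - (π x : V)) := by abel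
    have hdR := hπdiff x
    have hdfix := hfix x
    calc B (π x) (π x)
        = B ((π x : V) + ((x : V) - (π x : V))) ((π x : V) + ((x : V) - (π x : V)))
          - B (π x) ((x : V) - (π x : V)) - B ((x : V) - (π x : V)) (π x)
          - B ((x : V) - (π x : V)) ((x : V) - (π x : V)) := by
            simp only [map_add, LinearMap.add_apply]; ring
      _ = B x x := by
            rw [← hxd, horthNR _ (π x).2 _ hdR, hsymm ((x : V) - (π x : V)) (π x),
              horthNR _ (π x).2 _ hdR, hiso _ hdfix _ hdfix]
            ring
  -- moved spans
  have hspan : movedSpan H (M 0) = movedSpan H (N 0) := by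
    refine le_antisymm (movedSpan_le_aux H _ _ ?_) (movedSpan_le_aux H _ _ ?_)
    · intro w hw
      exact ⟨π ⟨w, hw⟩, (π ⟨w, hw⟩).2, w - (π ⟨w, hw⟩ : V), hfix ⟨w, hw⟩, by abel⟩
    · intro w hw
      exact ⟨π' ⟨w, hw⟩, (π' ⟨w, hw⟩).2, w - (π' ⟨w, hw⟩ : V), hfix' ⟨w, hw⟩, by abel⟩
  exact ⟨π, hπdiff, hinj, hrank, ⟨hinj, hsurj⟩, hfix, hBeq, hspan⟩
end

section
/- Let H be a subgroup of O(V) with the Borel–Lichnerowicz splitting property, satisfying Condition Φ, and such that V^H is totally isotropic. Let V = M¹ ⊕ ⋯ ⊕ M^p and V = N¹ ⊕ ⋯ ⊕ N^q be two direct-sum decompositions of V into mutually orthogonal nondegenerate indecomposable H-invariant subspaces. Then: (1) p = q; (2) after a suitable permutation of the indices, dim M^i = dim N^i and S(M^i,H) = S(N^i,H) for every 1 ≤ i ≤ p; (3) for each i, the projection π_i : M^i → N^i (onto N^i along the other N-summands) is a linear bijection satisfying ⟨π_i(x), π_i(x)⟩ = ⟨x,x⟩ for all x ∈ M^i, so that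 the map π = (π₁, …, π_p) : V → V is a distance-preserving linear bijection carrying each M^i onto N^i. -/
/-! ### Auxiliary machinery -/

open Function Module

section AuxHelpers

variable {V : Type*} [AddCommGroup V] [Module ℝ V]

lemma le_biSup_ne {q : ℕ} (N : Fin q → Submodule ℝ V) {j j' : Fin q} (h : j' ≠ j) :
    N j' ≤ ⨆ j'' ≠ j, N j'' :=
  le_trans (le_iSup (fun _ : j' ≠ j => N j') h) (le_iSup (fun j'' => ⨆ _ : j'' ≠ j, N j'') j')

lemma list_prod_fix (l : List (V ≃ₗ[ℝ] V)) (x : V) (h : ∀ a ∈ l, a x = x) :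
    l.prod x = x := by
  induction l with
  | nil => rfl
  | cons a t ih =>
      have hc : (a :: t).prod = a * t.prod := List.prod_cons
      rw [hc]
      have ht : t.prod x = x := ih (fun b hb => h b (List.mem_cons_of_mem _ hb))
      show a (t.prod x) = x
      rw [ht, h a (List.mem_cons_self)]

lemma exists_proj_family {q : ℕ} (N : Fin q → Submodule ℝ V)
    (hind : iSupIndep N) (hsup : iSup N = ⊤) :
    ∃ π : Fin q → (V →ₗ[ℝ] V),
      (∀ j x, π j x ∈ N j) ∧ (∀ j, ∀ x ∈ N j, π j x = x) ∧
      (∀ j j', j ≠ j' → ∀ x ∈ N j', π j x = 0) ∧ (∀ x, ∑ j, π j x = x) := by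
  have hcompl : ∀ j, IsCompl (N j) (⨆ j' ≠ j, N j') := by
    intro j
    refine ⟨hind j, ?_⟩
    rw [codisjoint_iff, eq_top_iff, ← hsup]
    refine iSup_le fun j' => ?_
    by_cases h : j' = j
    · subst h; exact le_sup_left
    · exact le_trans (le_biSup_ne N h) le_sup_right
  refine ⟨fun j => (N j).subtype ∘ₗ (N j).projectionOnto _ (hcompl j), ?_, ?_, ?_, ?_⟩
  · intro j x; exact ((N j).projectionOnto _ (hcompl j) x).2
  · intro j x hx
    simp only [LinearMap.coe_comp, Function.comp_apply, Submodule.coe_subtype]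
    rw [Submodule.projectionOnto_apply_left (hcompl j) ⟨x, hx⟩]
  · intro j j' hne x hx
    simp only [LinearMap.coe_comp, Function.comp_apply, Submodule.coe_subtype]
    rw [Submodule.projectionOnto_apply_of_mem_right (hcompl j) (le_biSup_ne N (Ne.symm hne) hx),
      Submodule.coe_zero]
  · intro x
    have hx : x ∈ iSup N := by rw [hsup]; exact Submodule.mem_top
    refine Submodule.iSup_induction
      (motive := fun x => ∑ j, ((N j).subtype ∘ₗ (N j).projectionOnto _ (hcompl j)) x = x)
      N hx ?_ ?_ ?_
    · intro j0 y hy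
      rw [Finset.sum_eq_single j0]
      · simp only [LinearMap.coe_comp, Function.comp_apply, Submodule.coe_subtype]
        rw [Submodule.projectionOnto_apply_left (hcompl j0) ⟨y, hy⟩]
      · intro j _ hne
        simp only [LinearMap.coe_comp, Function.comp_apply, Submodule.coe_subtype]
        rw [Submodule.projectionOnto_apply_of_mem_right (hcompl j)
          (le_biSup_ne N (Ne.symm hne) hy), Submodule.coe_zero]
      · intro h; exact absurd (Finset.mem_univ j0) h
    · simp
    · intro y z hy hz
      simp only [map_add]
      rw [Finset.sum_add_distrib, hy, hz]

lemma proj_B_sum (B : LinearMap.BilinForm ℝ V)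
    {q : ℕ} {N : Fin q → Submodule ℝ V} {π : Fin q → (V →ₗ[ℝ] V)}
    (hPa : ∀ j x, π j x ∈ N j) (hPd : ∀ x, ∑ j, π j x = x)
    (horth : ∀ j j', j ≠ j' → ∀ x ∈ N j, ∀ y ∈ N j', B x y = 0)
    (u v : V) :
    B u v = ∑ j, B (π j u) (π j v) := by
  conv_lhs => rw [← hPd u]
  rw [LinearMap.BilinForm.sum_left]
  refine Finset.sum_congr rfl fun j _ => ?_
  conv_lhs => rw [← hPd v]
  rw [map_sum, Finset.sum_eq_single j]
  · intro j' _ hne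
    exact horth j j' (Ne.symm hne) _ (hPa j u) _ (hPa j' v)
  · intro h; exact absurd (Finset.mem_univ j) h

lemma proj_sub_fix {q : ℕ} {N : Fin q → Submodule ℝ V} {π : Fin q → (V →ₗ[ℝ] V)}
    (hPa : ∀ j x, π j x ∈ N j) (hPd : ∀ x, ∑ j, π j x = x)
    (k : V ≃ₗ[ℝ] V) (j : Fin q) (hfx : ∀ j', j' ≠ j → ∀ y ∈ N j', k y = y) (x : V) :
    x - k x = π j x - k (π j x) := by
  have hx1 : x = ∑ j', π j' x := (hPd x).symm
  conv_lhs => rw [hx1, map_sum]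
  rw [← Finset.sum_sub_distrib, Finset.sum_eq_single j]
  · intro j' _ hne'
    rw [hfx j' hne' _ (hPa j' x), sub_self]
  · intro h; exact absurd (Finset.mem_univ j) h

end AuxHelpers

section ExchangeCore

variable {V : Type*} [AddCommGroup V] [Module ℝ V] [FiniteDimensional ℝ V]

lemma exchange
    (B : LinearMap.BilinForm ℝ V) (hsymm : ∀ x y : V, B x y = B y x)
    (H : Subgroup (V ≃ₗ[ℝ] V))
    {q : ℕ} {N : Fin q → Submodule ℝ V} {π : Fin q → (V →ₗ[ℝ] V)}
    (hPa : ∀ j x, π j x ∈ N j) (hPb : ∀ j, ∀ x ∈ N j, π j x = x)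
    (hPd : ∀ x, ∑ j, π j x = x)
    (hNorth : ∀ j j', j ≠ j' → ∀ x ∈ N j, ∀ y ∈ N j', B x y = 0)
    (hNnd : ∀ j, NondegOn B (N j))
    (hNinv : ∀ j, ∀ g ∈ H, ∀ w ∈ N j, g w ∈ N j)
    (hNc4 : ∀ j, ∀ U₁ U₂ : Submodule ℝ V, U₁ ⊔ U₂ = N j → U₁ ⊓ U₂ = ⊥ →
      (∀ g ∈ H, ∀ w ∈ U₁, g w ∈ U₁) → (∀ g ∈ H, ∀ w ∈ U₂, g w ∈ U₂) →
      NondegOn B U₁ → NondegOn B U₂ →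
      (∀ x ∈ U₁, ∀ y ∈ U₂, B x y = 0) → U₁ = ⊥ ∨ U₂ = ⊥)
    (W : Submodule ℝ V)
    (hWne : W ≠ ⊥) (hWnd : NondegOn B W) (hWinv : ∀ g ∈ H, ∀ w ∈ W, g w ∈ W)
    (hWc4 : ∀ U₁ U₂ : Submodule ℝ V, U₁ ⊔ U₂ = W → U₁ ⊓ U₂ = ⊥ →
      (∀ g ∈ H, ∀ w ∈ U₁, g w ∈ U₁) → (∀ g ∈ H, ∀ w ∈ U₂, g w ∈ U₂) →
      NondegOn B U₁ → NondegOn B U₂ →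
      (∀ x ∈ U₁, ∀ y ∈ U₂, B x y = 0) → U₁ = ⊥ ∨ U₂ = ⊥)
    (ρ : V →ₗ[ℝ] V)
    (hr1 : ∀ x, ρ x ∈ W) (hr2 : ∀ x ∈ W, ρ x = x)
    (hr3 : ∀ u v, v ∈ W → B (ρ u) v = B u v)
    (hr3' : ∀ u v, u ∈ W → B u (ρ v) = B u v)
    (hr4 : ∀ g ∈ H, ∀ x, ρ (g x) = g (ρ x))
    (hπequiv : ∀ j, ∀ g ∈ H, ∀ x, π j (g x) = g (π j x)) :
    ∃ j, (∀ x ∈ W, π j x = 0 → x = 0) ∧ Submodule.map (π j) W = N j := by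
  classical
  have hBl : ∀ (j : Fin q) (u v : V), B (π j u) v = B (π j u) (π j v) := by
    intro j u v
    conv_lhs => rw [← hPd v]
    rw [map_sum, Finset.sum_eq_single j]
    · intro j' _ hne
      exact hNorth j j' (Ne.symm hne) _ (hPa j u) _ (hPa j' v)
    · intro h; exact absurd (Finset.mem_univ j) h
  have hBr : ∀ (j : Fin q) (u v : V), B u (π j v) = B (π j u) (π j v) := by
    intro j u v
    conv_lhs => rw [← hPd u]
    rw [LinearMap.BilinForm.sum_left, Finset.sum_eq_single j]
    · intro j' _ hne
      exact hNorth j' j hne _ (hPa j' u) _ (hPa j v)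
    · intro h; exact absurd (Finset.mem_univ j) h
  -- the endomorphisms
  set ρ' : V →ₗ[ℝ] ↥W := LinearMap.codRestrict W ρ hr1 with hρ'
  set E : Fin q → Module.End ℝ ↥W := fun j => ρ' ∘ₗ (π j) ∘ₗ W.subtype with hE
  have hEcoe : ∀ (j : Fin q) (v : ↥W), ((E j v : V)) = ρ (π j ↑v) := fun _ _ => rfl
  have hEsum : ∑ j, E j = LinearMap.id := by
    apply LinearMap.ext; intro v
    apply Subtype.ext
    have h1 : ((((∑ j, E j)) v : ↥W) : V) = ∑ j, ((E j v : V)) := by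
      rw [LinearMap.sum_apply]
      exact Submodule.coe_sum _ _ _
    rw [h1]
    have h2 : ∑ j, ((E j v : V)) = ρ (∑ j, π j ↑v) := by
      simp only [hEcoe, ← map_sum]
    rw [h2, hPd, hr2 _ v.2]
    rfl
  -- nontrivial ambient space
  obtain ⟨w0, hw0W, hw0⟩ := (Submodule.ne_bot_iff W).mp hWne
  haveI : Nontrivial V := ⟨w0, 0, hw0⟩
  set n : ℕ := Module.finrank ℝ V with hn
  have hnpos : 0 < n := Module.finrank_pos
  obtain ⟨n', hn'⟩ : ∃ n', n = n' + 1 := ⟨n - 1, (Nat.succ_pred_eq_of_pos hnpos).symm⟩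
  -- find a non-nilpotent component
  have hfr : (Module.finrank ℝ ↥W : ℝ) ≠ 0 := by
    rw [Nat.cast_ne_zero]
    intro h0
    exact hWne (Submodule.finrank_eq_zero.mp h0)
  obtain ⟨j, hjtr⟩ : ∃ j, LinearMap.trace ℝ ↥W (E j) ≠ 0 := by
    by_contra hcon
    push_neg at hcon
    have h0 : LinearMap.trace ℝ ↥W (∑ j, E j) = 0 := by
      rw [map_sum]
      exact Finset.sum_eq_zero fun j _ => hcon j
    rw [hEsum, LinearMap.trace_id] at h0
    exact hfr h0
  have hnil : ¬ IsNilpotent (E j) := by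
    intro hni
    exact hjtr (LinearMap.isNilpotent_trace_of_isNilpotent hni).eq_zero
  refine ⟨j, ?_⟩
  -- self-adjointness
  have hSA1 : ∀ v w : ↥W, B ((E j v : V)) ↑w = B ↑v ((E j w : V)) := by
    intro v w
    have l1 : B ((E j v : V)) ↑w = B (π j ↑v) (π j ↑w) := by
      rw [hEcoe, hr3 _ _ w.2, hBl]
    have l2 : B (↑v : V) ((E j w : V)) = B (π j ↑v) (π j ↑w) := by
      rw [hEcoe, hr3' _ _ v.2, hBr]
    rw [l1, l2]
  have hSA : ∀ (m : ℕ) (v w : ↥W), B (((E j ^ m) v : V)) ↑w = B ↑v (((E j ^ m) w : V)) := by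
    intro m
    induction m with
    | zero => intro v w; rfl
    | succ m ih =>
        intro v w
        have h1 : (E j ^ (m + 1)) v = (E j ^ m) (E j v) := by rw [pow_succ]; rfl
        have h2 : (E j ^ (m + 1)) w = E j ((E j ^ m) w) := by rw [pow_succ']; rfl
        rw [h1, h2]
        exact (ih (E j v) w).trans (hSA1 v ((E j ^ m) w))
  -- the V-level endomorphism
  set F : V →ₗ[ℝ] V := ρ ∘ₗ (π j) with hF
  have hFW : ∀ x, F x ∈ W := fun x => hr1 _
  have hFg : ∀ g ∈ H, ∀ x, F (g x) = g (F x) := by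
    intro g hg x
    show ρ (π j (g x)) = g (ρ (π j x))
    rw [hπequiv j g hg, hr4 g hg]
  have hFpow_succ : ∀ (m : ℕ) (x : V), (F ^ (m + 1)) x = F ((F ^ m) x) := by
    intro m x; rw [pow_succ']; rfl
  have hFpow_succ' : ∀ (m : ℕ) (x : V), (F ^ (m + 1)) x = (F ^ m) (F x) := by
    intro m x; rw [pow_succ]; rfl
  have hFpowg : ∀ (m : ℕ), ∀ g ∈ H, ∀ x, (F ^ m) (g x) = g ((F ^ m) x) := by
    intro m
    induction m with
    | zero => intro g hg x; rfl
    | succ m ih =>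
        intro g hg x
        rw [hFpow_succ, hFpow_succ, ih g hg, hFg g hg]
  have hFE : ∀ (m : ℕ) (v : ↥W), (((E j ^ m) v : V)) = (F ^ m) ↑v := by
    intro m
    induction m with
    | zero => intro v; rfl
    | succ m ih =>
        intro v
        have h2 : (E j ^ (m + 1)) v = E j ((E j ^ m) v) := by rw [pow_succ']; rfl
        rw [h2, hEcoe, hFpow_succ]
        rw [ih]
        rfl
  have hFpowW : ∀ (m : ℕ), 0 < m → ∀ x, (F ^ m) x ∈ W := by
    intro m hm x
    obtain ⟨m', rfl⟩ : ∃ m', m = m' + 1 := ⟨m - 1, (Nat.succ_pred_eq_of_pos hm).symm⟩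
    rw [hFpow_succ]
    exact hFW _
  -- kernel stabilization at the V level
  have hker2n : LinearMap.ker (F ^ (n + n)) = LinearMap.ker (F ^ n) := by
    rw [Module.End.ker_pow_eq_ker_pow_finrank_of_le (le_add_self : n ≤ n + n),
      Module.End.ker_pow_eq_ker_pow_finrank_of_le (le_refl n)]
  -- the two invariant pieces of W
  set U₁ : Submodule ℝ V := Submodule.map W.subtype (LinearMap.ker (E j ^ n)) with hU₁
  set U₂ : Submodule ℝ V := Submodule.map W.subtype (LinearMap.range (E j ^ n)) with hU₂
  have hU₁mem : ∀ x, x ∈ U₁ ↔ x ∈ W ∧ (F ^ n) x = 0 := by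
    intro x
    constructor
    · rintro ⟨v, hv, rfl⟩
      refine ⟨v.2, ?_⟩
      show (F ^ n) ↑v = 0
      rw [← hFE n v, LinearMap.mem_ker.mp hv, Submodule.coe_zero]
    · rintro ⟨hxW, hx0⟩
      have hk : (⟨x, hxW⟩ : ↥W) ∈ LinearMap.ker (E j ^ n) := by
        rw [LinearMap.mem_ker]
        apply Subtype.ext
        rw [hFE n ⟨x, hxW⟩, Submodule.coe_zero]
        exact hx0
      exact ⟨⟨x, hxW⟩, hk, rfl⟩
  have hU₂mem : ∀ x, x ∈ U₂ ↔ ∃ w ∈ W, (F ^ n) w = x := by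
    intro x
    constructor
    · rintro ⟨v, hv, rfl⟩
      obtain ⟨u, hu⟩ := LinearMap.mem_range.mp hv
      exact ⟨↑u, u.2, by show (F ^ n) ↑u = ↑v; rw [← hFE n u, hu]⟩
    · rintro ⟨w, hwW, rfl⟩
      exact ⟨(E j ^ n) ⟨w, hwW⟩, LinearMap.mem_range.mpr ⟨⟨w, hwW⟩, rfl⟩, (hFE n ⟨w, hwW⟩)⟩
  have hU₁W : U₁ ≤ W := by
    intro x hx; exact ((hU₁mem x).mp hx).1
  have hU₂W : U₂ ≤ W := by
    intro x hx
    obtain ⟨w, hwW, rfl⟩ := (hU₂mem x).mp hx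
    exact hFpowW n hnpos w
  -- W-level: kernel and range are complementary
  have hdisj : LinearMap.ker (E j ^ n) ⊓ LinearMap.range (E j ^ n) = ⊥ := by
    rw [eq_bot_iff]
    rintro v ⟨hvk, hvr⟩
    obtain ⟨u, hu⟩ := LinearMap.mem_range.mp hvr
    have h1 : (F ^ (n + n)) ↑u = 0 := by
      rw [pow_add]
      show (F ^ n) ((F ^ n) ↑u) = 0
      have : (F ^ n) ↑u = ↑v := by rw [← hFE, hu]
      rw [this, ← hFE n v, LinearMap.mem_ker.mp hvk, Submodule.coe_zero]
    have h2 : (F ^ n) ↑u = 0 := by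
      have := hker2n ▸ (LinearMap.mem_ker.mpr h1)
      exact LinearMap.mem_ker.mp this
    have h3 : (v : V) = 0 := by rw [← hu, hFE, h2]
    simpa using Subtype.ext h3
  have hsupW : LinearMap.ker (E j ^ n) ⊔ LinearMap.range (E j ^ n) = ⊤ := by
    apply Submodule.eq_top_of_finrank_eq
    have h1 := LinearMap.finrank_range_add_finrank_ker (E j ^ n)
    have h2 := Submodule.finrank_sup_add_finrank_inf_eq
      (LinearMap.ker (E j ^ n)) (LinearMap.range (E j ^ n))
    rw [hdisj] at h2
    simp only [finrank_bot, add_zero] at h2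
    omega
  have hsupU : U₁ ⊔ U₂ = W := by
    rw [hU₁, hU₂, ← Submodule.map_sup, hsupW, Submodule.map_subtype_top]
  have hinfU : U₁ ⊓ U₂ = ⊥ := by
    rw [eq_bot_iff]
    rintro x ⟨hx1, hx2⟩
    obtain ⟨hxW, hx0⟩ := (hU₁mem x).mp hx1
    obtain ⟨w, hwW, rfl⟩ := (hU₂mem x).mp hx2
    have h1 : (F ^ (n + n)) w = 0 := by
      rw [pow_add]
      exact hx0
    have h2 : (F ^ n) w = 0 := LinearMap.mem_ker.mp (hker2n ▸ LinearMap.mem_ker.mpr h1)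
    simp [h2]
  have hU₁inv : ∀ g ∈ H, ∀ w ∈ U₁, g w ∈ U₁ := by
    intro g hg x hx
    obtain ⟨hxW, hx0⟩ := (hU₁mem x).mp hx
    refine (hU₁mem _).mpr ⟨hWinv g hg x hxW, ?_⟩
    rw [hFpowg n g hg, hx0, map_zero]
  have hU₂inv : ∀ g ∈ H, ∀ w ∈ U₂, g w ∈ U₂ := by
    intro g hg x hx
    obtain ⟨w, hwW, rfl⟩ := (hU₂mem x).mp hx
    refine (hU₂mem _).mpr ⟨g w, hWinv g hg w hwW, ?_⟩
    rw [hFpowg n g hg]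
  have horthU : ∀ x ∈ U₁, ∀ y ∈ U₂, B x y = 0 := by
    intro x hx y hy
    obtain ⟨hxW, hx0⟩ := (hU₁mem x).mp hx
    obtain ⟨w, hwW, rfl⟩ := (hU₂mem y).mp hy
    have h1 : B x (((E j ^ n) ⟨w, hwW⟩ : V)) = B (((E j ^ n) ⟨x, hxW⟩ : V)) w :=
      (hSA n ⟨x, hxW⟩ ⟨w, hwW⟩).symm
    rw [hFE] at h1
    have h2 : (((E j ^ n) ⟨x, hxW⟩ : V)) = 0 := by rw [hFE]; exact hx0
    rw [h2] at h1
    simpa using h1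
  have hndU₁ : NondegOn B U₁ := by
    intro w hw hw0
    refine hWnd w (hU₁W hw) ?_
    intro u hu
    rw [← hsupU] at hu
    obtain ⟨u₁, hu₁, u₂, hu₂, rfl⟩ := Submodule.mem_sup.mp hu
    rw [map_add, hw0 u₁ hu₁, horthU w hw u₂ hu₂, add_zero]
  have hndU₂ : NondegOn B U₂ := by
    intro w hw hw0
    refine hWnd w (hU₂W hw) ?_
    intro u hu
    rw [← hsupU] at hu
    obtain ⟨u₁, hu₁, u₂, hu₂, rfl⟩ := Submodule.mem_sup.mp hu
    rw [map_add, hw0 u₂ hu₂, hsymm w u₁, horthU u₁ hu₁ w hw]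
    simp
  have hU₁bot : U₁ = ⊥ := by
    rcases hWc4 U₁ U₂ hsupU hinfU hU₁inv hU₂inv hndU₁ hndU₂ horthU with h | h
    · exact h
    · exfalso
      apply hnil
      refine ⟨n, ?_⟩
      apply LinearMap.ext; intro v
      have : (((E j ^ n) v : V)) ∈ U₂ := by
        rw [hFE]
        exact (hU₂mem _).mpr ⟨↑v, v.2, rfl⟩
      rw [h] at this
      simpa using Subtype.ext (by simpa using this : (((E j ^ n) v : V)) = 0)
  -- injectivity of π j on W
  have hinj : ∀ x ∈ W, π j x = 0 → x = 0 := by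
    intro x hxW hx0
    have hFx : F x = 0 := by
      show ρ (π j x) = 0
      rw [hx0, map_zero]
    have hFnx : (F ^ n) x = 0 := by
      rw [hn', hFpow_succ', hFx, map_zero]
    have : x ∈ U₁ := (hU₁mem x).mpr ⟨hxW, hFnx⟩
    rw [hU₁bot] at this
    simpa using this
  refine ⟨hinj, ?_⟩
  -- bijectivity of E j
  have hEinj : Function.Injective (E j) := by
    rw [← LinearMap.ker_eq_bot]
    rw [eq_bot_iff]
    intro v hv
    have hv0 : ((E j v : V)) = 0 := by rw [LinearMap.mem_ker.mp hv]; rfl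
    have hFv : F ↑v = 0 := by
      show ρ ((π j) ↑v) = 0
      rw [← hEcoe j v]; exact hv0
    have hFnv : (F ^ n) ↑v = 0 := by rw [hn', hFpow_succ', hFv, map_zero]
    have : (v : V) ∈ U₁ := (hU₁mem _).mpr ⟨v.2, hFnv⟩
    rw [hU₁bot] at this
    simpa using Subtype.ext (by simpa using this : (v : V) = 0)
  have hEsurj : Function.Surjective (E j) := (LinearMap.injective_iff_surjective).mp hEinj
  -- surjectivity onto N j
  set U₁' : Submodule ℝ V := Submodule.map (π j) W with hU₁'
  set U₂' : Submodule ℝ V := LinearMap.ker ρ ⊓ N j with hU₂'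
  have hU₁'N : U₁' ≤ N j := by
    rintro x ⟨w, hwW, rfl⟩
    exact hPa j w
  have hsup' : U₁' ⊔ U₂' = N j := by
    apply le_antisymm
    · exact sup_le hU₁'N inf_le_right
    · intro z hz
      obtain ⟨v, hv⟩ := hEsurj (ρ' z)
      have hv2 : ρ (π j ↑v) = ρ z := by
        rw [← hEcoe, hv]
        rfl
      have hmem1 : π j ↑v ∈ U₁' := ⟨↑v, v.2, rfl⟩
      have hmem2 : z - π j ↑v ∈ U₂' := by
        rw [hU₂', Submodule.mem_inf]
        constructor
        · rw [LinearMap.mem_ker, map_sub, hv2, sub_self]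
        · exact Submodule.sub_mem _ hz (hPa j ↑v)
      have hzz : z = π j ↑v + (z - π j ↑v) := by abel
      rw [hzz]
      exact Submodule.add_mem _ (Submodule.mem_sup_left hmem1) (Submodule.mem_sup_right hmem2)
  have hinf' : U₁' ⊓ U₂' = ⊥ := by
    rw [eq_bot_iff]
    intro x hx
    rw [Submodule.mem_inf] at hx
    obtain ⟨hx1, hx2⟩ := hx
    rw [hU₂', Submodule.mem_inf] at hx2
    obtain ⟨w, hwW, rfl⟩ := hx1
    have h0 : E j ⟨w, hwW⟩ = 0 := by
      apply Subtype.ext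
      rw [hEcoe]
      show ρ (π j w) = ↑(0 : ↥W)
      rw [LinearMap.mem_ker.mp hx2.1]
      rfl
    have hw0 : (⟨w, hwW⟩ : ↥W) = 0 := hEinj (by rw [h0, map_zero])
    have : w = 0 := by simpa using congrArg Subtype.val hw0
    simp [this]
  have hinv₁' : ∀ g ∈ H, ∀ w ∈ U₁', g w ∈ U₁' := by
    rintro g hg x ⟨w, hwW, rfl⟩
    exact ⟨g w, hWinv g hg w hwW, hπequiv j g hg w⟩
  have hinv₂' : ∀ g ∈ H, ∀ w ∈ U₂', g w ∈ U₂' := by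
    intro g hg x hx
    rw [hU₂', Submodule.mem_inf] at hx ⊢
    obtain ⟨hx1, hx2⟩ := hx
    constructor
    · rw [LinearMap.mem_ker, hr4 g hg, LinearMap.mem_ker.mp hx1, map_zero]
    · exact hNinv j g hg x hx2
  have horth' : ∀ x ∈ U₁', ∀ y ∈ U₂', B x y = 0 := by
    rintro x ⟨w, hwW, rfl⟩ y hy
    rw [hU₂', Submodule.mem_inf] at hy
    obtain ⟨hy1, hy2⟩ := hy
    have h1 : B (π j w) y = B (π j w) (π j y) := hBl j w y
    have h2 : B (π j w) (π j y) = B w (π j y) := (hBr j w y).symm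
    have h3 : π j y = y := hPb j y hy2
    have h4 : B w y = B w (ρ y) := (hr3' w y hwW).symm
    rw [h1, h2, h3, h4, LinearMap.mem_ker.mp hy1, map_zero]
  have hnd₁' : NondegOn B U₁' := by
    intro w hw hw0
    refine hNnd j w (hU₁'N hw) ?_
    intro u hu
    rw [← hsup'] at hu
    obtain ⟨u₁, hu₁, u₂, hu₂, rfl⟩ := Submodule.mem_sup.mp hu
    rw [map_add, hw0 u₁ hu₁, horth' w hw u₂ hu₂, add_zero]
  have hnd₂' : NondegOn B U₂' := by
    intro w hw hw0
    refine hNnd j w ((Submodule.mem_inf.mp hw).2) ?_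
    intro u hu
    rw [← hsup'] at hu
    obtain ⟨u₁, hu₁, u₂, hu₂, rfl⟩ := Submodule.mem_sup.mp hu
    rw [map_add, hw0 u₂ hu₂, hsymm w u₁, horth' u₁ hu₁ w hw]
    simp
  rcases hNc4 j U₁' U₂' hsup' hinf' hinv₁' hinv₂' hnd₁' hnd₂' horth' with h | h
  · exfalso
    apply hWne
    rw [eq_bot_iff]
    intro w hwW
    have : π j w ∈ U₁' := ⟨w, hwW, rfl⟩
    rw [h] at this
    have hpj : π j w = 0 := by simpa using this
    simpa using hinj w hwW hpj
  · rw [h, sup_bot_eq] at hsup'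
    exact hsup'

lemma core_match
    (B : LinearMap.BilinForm ℝ V) (hsymm : ∀ x y : V, B x y = B y x)
    (H : Subgroup (V ≃ₗ[ℝ] V))
    (hiso2 : ∀ x y : V, (∀ g ∈ H, g x = x) → (∀ g ∈ H, g y = y) → B x y = 0)
    {p q : ℕ} {M : Fin p → Submodule ℝ V} {N : Fin q → Submodule ℝ V}
    {πM : Fin p → (V →ₗ[ℝ] V)} {πN : Fin q → (V →ₗ[ℝ] V)}
    (hMa : ∀ i x, πM i x ∈ M i) (hMb : ∀ i, ∀ x ∈ M i, πM i x = x)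
    (hMc : ∀ i i', i ≠ i' → ∀ x ∈ M i', πM i x = 0) (hMd : ∀ x, ∑ i, πM i x = x)
    (hNa : ∀ j x, πN j x ∈ N j) (hNb : ∀ j, ∀ x ∈ N j, πN j x = x)
    (hNc : ∀ j j', j ≠ j' → ∀ x ∈ N j', πN j x = 0) (hNd : ∀ x, ∑ j, πN j x = x)
    (hMorth : ∀ i i', i ≠ i' → ∀ x ∈ M i, ∀ y ∈ M i', B x y = 0)
    (hNorth : ∀ j j', j ≠ j' → ∀ x ∈ N j, ∀ y ∈ N j', B x y = 0)
    (hMne : ∀ i, M i ≠ ⊥) (hMnd : ∀ i, NondegOn B (M i))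
    (hMinv : ∀ i, ∀ g ∈ H, ∀ w ∈ M i, g w ∈ M i)
    (hMc4 : ∀ i, ∀ U₁ U₂ : Submodule ℝ V, U₁ ⊔ U₂ = M i → U₁ ⊓ U₂ = ⊥ →
      (∀ g ∈ H, ∀ w ∈ U₁, g w ∈ U₁) → (∀ g ∈ H, ∀ w ∈ U₂, g w ∈ U₂) →
      NondegOn B U₁ → NondegOn B U₂ →
      (∀ x ∈ U₁, ∀ y ∈ U₂, B x y = 0) → U₁ = ⊥ ∨ U₂ = ⊥)
    (hNne : ∀ j, N j ≠ ⊥) (hNnd : ∀ j, NondegOn B (N j))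
    (hNinv : ∀ j, ∀ g ∈ H, ∀ w ∈ N j, g w ∈ N j)
    (hNc4 : ∀ j, ∀ U₁ U₂ : Submodule ℝ V, U₁ ⊔ U₂ = N j → U₁ ⊓ U₂ = ⊥ →
      (∀ g ∈ H, ∀ w ∈ U₁, g w ∈ U₁) → (∀ g ∈ H, ∀ w ∈ U₂, g w ∈ U₂) →
      NondegOn B U₁ → NondegOn B U₂ →
      (∀ x ∈ U₁, ∀ y ∈ U₂, B x y = 0) → U₁ = ⊥ ∨ U₂ = ⊥)
    (Ks : Fin q → Subgroup (V ≃ₗ[ℝ] V))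
    (hKsub : ∀ j, Ks j ≤ H)
    (hKfix : ∀ j j', j' ≠ j → ∀ k ∈ Ks j, ∀ x ∈ N j', k x = x)
    (hKgen : ∀ h ∈ H, ∀ x : V, (∀ j, ∀ k ∈ Ks j, k x = x) → h x = x) :
    ∃ σ : Fin p → Fin q, Function.Injective σ ∧
      ∀ i, (∀ x ∈ M i, πN (σ i) x = 0 → x = 0) ∧
           (Submodule.map (πN (σ i)) (M i) = N (σ i)) ∧
           (∀ x ∈ M i, ∀ y ∈ M i, B (πN (σ i) x) (πN (σ i) y) = B x y) ∧
           (∀ j, j ≠ σ i → ∀ x ∈ M i, ∀ g ∈ H, g (πN j x) = πN j x) := by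
  classical
  -- equivariance of the projections
  have hπNequiv : ∀ j, ∀ g ∈ H, ∀ x, πN j (g x) = g (πN j x) := by
    intro j g hg x
    conv_lhs => rw [← hNd x]
    rw [map_sum, map_sum, Finset.sum_eq_single j]
    · rw [hNb j _ (hNinv j g hg _ (hNa j x))]
    · intro j' _ hne
      exact hNc j j' (Ne.symm hne) _ (hNinv j' g hg _ (hNa j' x))
    · intro h; exact absurd (Finset.mem_univ j) h
  have hπMequiv : ∀ i, ∀ g ∈ H, ∀ x, πM i (g x) = g (πM i x) := by
    intro i g hg x
    conv_lhs => rw [← hMd x]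
    rw [map_sum, map_sum, Finset.sum_eq_single i]
    · rw [hMb i _ (hMinv i g hg _ (hMa i x))]
    · intro i' _ hne
      exact hMc i i' (Ne.symm hne) _ (hMinv i' g hg _ (hMa i' x))
    · intro h; exact absurd (Finset.mem_univ i) h
  -- B-compatibility of the M-projections
  have hMBl : ∀ (i : Fin p) (u v : V), B (πM i u) v = B (πM i u) (πM i v) := by
    intro i u v
    conv_lhs => rw [← hMd v]
    rw [map_sum, Finset.sum_eq_single i]
    · intro i' _ hne
      exact hMorth i i' (Ne.symm hne) _ (hMa i u) _ (hMa i' v)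
    · intro h; exact absurd (Finset.mem_univ i) h
  have hMBr : ∀ (i : Fin p) (u v : V), B u (πM i v) = B (πM i u) (πM i v) := by
    intro i u v
    conv_lhs => rw [← hMd u]
    rw [LinearMap.BilinForm.sum_left, Finset.sum_eq_single i]
    · intro i' _ hne
      exact hMorth i' i hne _ (hMa i' u) _ (hMa i v)
    · intro h; exact absurd (Finset.mem_univ i) h
  have hNBsum : ∀ u v : V, B u v = ∑ j, B (πN j u) (πN j v) := by
    intro u v
    conv_lhs => rw [← hNd u]
    rw [LinearMap.BilinForm.sum_left]
    refine Finset.sum_congr rfl fun j _ => ?_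
    conv_lhs => rw [← hNd v]
    rw [map_sum, Finset.sum_eq_single j]
    · intro j' _ hne
      exact hNorth j j' (Ne.symm hne) _ (hNa j u) _ (hNa j' v)
    · intro h; exact absurd (Finset.mem_univ j) h
  -- apply the exchange lemma to each M i
  have hstep : ∀ i, ∃ j, (∀ x ∈ M i, πN j x = 0 → x = 0) ∧
      Submodule.map (πN j) (M i) = N j := by
    intro i
    refine exchange B hsymm H hNa hNb hNd hNorth hNnd hNinv hNc4 (M i)
      (hMne i) (hMnd i) (hMinv i) (hMc4 i) (πM i) (hMa i) (hMb i) ?_ ?_ ?_ hπNequiv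
    · intro u v hv
      rw [hMBl i u v, ← hMBr i u v, hMb i v hv]
    · intro u v hu
      rw [hMBr i u v, ← hMBl i u v, hMb i u hu]
    · intro g hg x
      exact hπMequiv i g hg x
  choose σ hσ1 hσ2 using hstep
  -- fixed components
  have hfix : ∀ i, ∀ j, j ≠ σ i → ∀ x ∈ M i, ∀ g ∈ H, g (πN j x) = πN j x := by
    intro i j hne x hx g hg
    have MN0 : ∀ y, y ∈ M i → y ∈ N j → y = 0 := by
      intro y hyM hyN
      exact hσ1 i y hyM (hNc (σ i) j (fun h => hne h.symm) y hyN)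
    have hkfix : ∀ k ∈ Ks j, k x = x := by
      intro k hk
      have hkH : (k : V ≃ₗ[ℝ] V) ∈ H := hKsub j hk
      have hsub1 : x - k x ∈ M i :=
        Submodule.sub_mem _ hx (hMinv i k hkH x hx)
      have hx1 : x = ∑ j', πN j' x := (hNd x).symm
      have h3 : x - k x = πN j x - k (πN j x) := by
        conv_lhs => rw [hx1, map_sum]
        rw [← Finset.sum_sub_distrib]
        rw [Finset.sum_eq_single j]
        · intro j' _ hne'
          rw [hKfix j j' hne' k hk _ (hNa j' x), sub_self]
        · intro h; exact absurd (Finset.mem_univ j) h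
      have hsub2 : x - k x ∈ N j := by
        rw [h3]
        exact Submodule.sub_mem _ (hNa j x) (hNinv j k hkH _ (hNa j x))
      have h0 : x - k x = 0 := MN0 _ hsub1 hsub2
      have := sub_eq_zero.mp h0
      exact this.symm
    refine hKgen g hg _ ?_
    intro j'' k hk
    by_cases hj : j'' = j
    · subst hj
      calc k (πN j'' x) = πN j'' (k x) := (hπNequiv j'' k (hKsub j'' hk) x).symm
        _ = πN j'' x := by rw [hkfix k hk]
    · exact hKfix j'' j (Ne.symm hj) k hk _ (hNa j x)
  -- isometry of the projections
  have hpair : ∀ i, ∀ x ∈ M i, ∀ y ∈ M i, B (πN (σ i) x) (πN (σ i) y) = B x y := by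
    intro i x hx y hy
    rw [hNBsum x y]
    rw [Finset.sum_eq_single (σ i)]
    · intro j _ hne
      exact hiso2 _ _ (fun g hg => hfix i j hne x hx g hg)
        (fun g hg => hfix i j hne y hy g hg)
    · intro h; exact absurd (Finset.mem_univ (σ i)) h
  -- injectivity of σ
  have hσinj : Function.Injective σ := by
    intro i i' hσeq
    by_contra hne
    -- N (σ i) would be totally degenerate
    obtain ⟨z, hzN, hz0⟩ := (Submodule.ne_bot_iff (N (σ i))).mp (hNne (σ i))
    refine hz0 (hNnd (σ i) z hzN ?_)
    intro u hu
    obtain ⟨x, hxM, hxz⟩ : ∃ x ∈ M i, πN (σ i) x = z := by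
      have := (hσ2 i).symm ▸ hzN
      exact this
    obtain ⟨y, hyM, hyu⟩ : ∃ y ∈ M i', πN (σ i') y = u := by
      have := (hσ2 i').symm ▸ (hσeq ▸ hu)
      exact this
    have hBxy : B x y = 0 := hMorth i i' hne x hxM y hyM
    have hcross : B (πN (σ i) x) (πN (σ i) y) = B x y := by
      rw [hNBsum x y, Finset.sum_eq_single (σ i)]
      · intro j _ hnej
        refine hiso2 _ _ (fun g hg => hfix i j hnej x hxM g hg)
          (fun g hg => ?_)
        have hnej' : j ≠ σ i' := by rw [← hσeq]; exact hnej
        exact hfix i' j hnej' y hyM g hg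
      · intro h; exact absurd (Finset.mem_univ (σ i)) h
    rw [← hxz, ← hyu, ← hσeq, hcross, hBxy]
  exact ⟨σ, hσinj, fun i => ⟨hσ1 i, hσ2 i, hpair i, fun j hne x hx g hg => hfix i j hne x hx g hg⟩⟩

end ExchangeCore

section GLB

variable {V : Type*} [AddCommGroup V] [Module ℝ V]

lemma groups_of_BL (B : LinearMap.BilinForm ℝ V) (H : Subgroup (V ≃ₗ[ℝ] V))
    (hBL : BorelLichnerowicz B H)
    {q : ℕ} (N : Fin q → Submodule ℝ V) (hind : iSupIndep N) (hsup : iSup N = ⊤)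
    (horth : ∀ j j', j ≠ j' → ∀ x ∈ N j, ∀ y ∈ N j', B x y = 0)
    (hinv : ∀ j, InvariantUnder H (N j)) (hnd : ∀ j, NondegOn B (N j)) :
    ∃ Ks : Fin q → Subgroup (V ≃ₗ[ℝ] V),
      (∀ j, Ks j ≤ H) ∧
      (∀ j j', j' ≠ j → ∀ k ∈ Ks j, ∀ x ∈ N j', k x = x) ∧
      (∀ h ∈ H, ∃ l : List (V ≃ₗ[ℝ] V), (∀ a ∈ l, ∃ j, a ∈ Ks j) ∧ h = l.prod) := by
  classical
  set U : Fin (q + 1) → Submodule ℝ V := Fin.cases ⊥ N with hU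
  have hU0 : U 0 = ⊥ := rfl
  have hUs : ∀ j : Fin q, U j.succ = N j := fun j => by simp [hU]
  have h1 : iSupIndep U := by
    intro i
    induction i using Fin.cases with
    | zero => rw [hU0]; exact disjoint_bot_left
    | succ j =>
        rw [hUs]
        refine Disjoint.mono_right ?_ (hind j)
        refine iSup_le fun i' => iSup_le fun hne => ?_
        induction i' using Fin.cases with
        | zero => rw [hU0]; exact bot_le
        | succ j' =>
            rw [hUs]
            have hjj : j' ≠ j := fun h => hne (by rw [h])
            exact le_biSup_ne N hjj
  have h2 : iSup U = ⊤ := by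
    apply le_antisymm le_top
    rw [← hsup]
    refine iSup_le fun j => ?_
    rw [← hUs j]
    exact le_iSup U j.succ
  have h3 : ∀ i i', i ≠ i' → ∀ x ∈ U i, ∀ y ∈ U i', B x y = 0 := by
    intro i i' hne x hx y hy
    induction i using Fin.cases with
    | zero =>
        rw [hU0] at hx
        rw [(Submodule.mem_bot ℝ).mp hx]
        simp
    | succ j =>
        induction i' using Fin.cases with
        | zero =>
            rw [hU0] at hy
            rw [(Submodule.mem_bot ℝ).mp hy]
            simp
        | succ j' =>
            rw [hUs] at hx hy
            have hjj : j ≠ j' := fun h => hne (by rw [h])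
            exact horth j j' hjj x hx y hy
  have h4 : ∀ i, InvariantUnder H (U i) := by
    intro i
    induction i using Fin.cases with
    | zero =>
        intro g hg w hw
        rw [hU0] at hw ⊢
        rw [(Submodule.mem_bot ℝ).mp hw]
        simp
    | succ j =>
        intro g hg w hw
        rw [hUs] at hw ⊢
        exact hinv j g hg w hw
  have h5 : U 0 ≤ fixedSubspace H ⊤ := by rw [hU0]; exact bot_le
  have h6 : ∀ i : Fin q, NondegOn B (U i.succ) := fun i => by rw [hUs]; exact hnd i
  obtain ⟨Ks, hIDP, hact⟩ := hBL q U h1 h2 h3 h4 h5 h6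
  refine ⟨Ks, hIDP.1, ?_, ?_⟩
  · intro j j' hne k hk x hx
    refine (hact j).2 j'.succ ?_ k hk x ?_
    · intro h
      exact hne (Fin.succ_injective _ h)
    · rw [hUs]; exact hx
  · intro h hH
    obtain ⟨f, hf, -⟩ := hIDP.2.2.2 h hH
    refine ⟨List.ofFn fun j => ((f j : V ≃ₗ[ℝ] V)), ?_, hf⟩
    intro a ha
    rw [List.mem_ofFn] at ha
    obtain ⟨j, rfl⟩ := ha
    exact ⟨j, (f j).2⟩

end GLB

/-- Uniqueness of the decomposition into indecomposable summands when `V^H`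
is totally isotropic, `H` has the Borel–Lichnerowicz splitting property and satisfies
Condition Φ: `p = q`, and after a permutation of indices the summands have equal
dimensions, equal `S(·,H)`, admit form-preserving linear bijections given by the natural
projections, and the two decompositions differ by a distance-preserving linear bijection
of `V`. -/
theorem unique_decomposition_totallyIsotropic_fixed
    {V : Type*} [AddCommGroup V] [Module ℝ V] [FiniteDimensional ℝ V]
    (B : LinearMap.BilinForm ℝ V)
    (hsymm : ∀ x y : V, B x y = B y x) (hnd : NondegOn B ⊤)
    (H : Subgroup (V ≃ₗ[ℝ] V)) (hH : H ≤ orthogonalGroup B)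
    (hBL : BorelLichnerowicz B H) (hPhi : ConditionPhi B H)
    (hiso : TotallyIsotropic B (fixedSubspace H ⊤))
    (p q : ℕ) (M : Fin p → Submodule ℝ V) (N : Fin q → Submodule ℝ V)
    (hMind : iSupIndep M) (hMsup : iSup M = ⊤)
    (hMorth : ∀ i j, i ≠ j → ∀ x ∈ M i, ∀ y ∈ M j, B x y = 0)
    (hMindec : ∀ i, IsIndecomposable B H (M i))
    (hNind : iSupIndep N) (hNsup : iSup N = ⊤)
    (hNorth : ∀ i j, i ≠ j → ∀ x ∈ N i, ∀ y ∈ N j, B x y = 0)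
    (hNindec : ∀ j, IsIndecomposable B H (N j)) :
    p = q ∧
    ∃ σ : Fin p ≃ Fin q,
      (∀ i, Module.finrank ℝ ↥(M i) = Module.finrank ℝ ↥(N (σ i)) ∧
        movedSpan H (M i) = movedSpan H (N (σ i)) ∧
        ∃ π : ↥(M i) →ₗ[ℝ] ↥(N (σ i)),
          (∀ x : ↥(M i), (x : V) - (π x : V) ∈ ⨆ j, ⨆ (_ : j ≠ σ i), N j) ∧
          Function.Bijective π ∧
          ∀ x : ↥(M i), B (π x) (π x) = B x x) ∧
      ∃ T : V ≃ₗ[ℝ] V, (∀ x : V, B (T x) (T x) = B x x) ∧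
        ∀ i, (M i).map (T : V →ₗ[ℝ] V) = N (σ i) := by
  classical
  -- projection families
  obtain ⟨πM, hMa, hMb, hMc, hMd⟩ := exists_proj_family M hMind hMsup
  obtain ⟨πN, hNa, hNb, hNc, hNd⟩ := exists_proj_family N hNind hNsup
  -- basic data of the decompositions
  have hMne : ∀ i, M i ≠ ⊥ := fun i => (hMindec i).1
  have hMnd : ∀ i, NondegOn B (M i) := fun i => (hMindec i).2.1
  have hMinv : ∀ i, ∀ g ∈ H, ∀ w ∈ M i, g w ∈ M i := fun i => (hMindec i).2.2.1
  have hMc4 := fun i => (hMindec i).2.2.2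
  have hNne : ∀ j, N j ≠ ⊥ := fun j => (hNindec j).1
  have hNnd : ∀ j, NondegOn B (N j) := fun j => (hNindec j).2.1
  have hNinv : ∀ j, ∀ g ∈ H, ∀ w ∈ N j, g w ∈ N j := fun j => (hNindec j).2.2.1
  have hNc4 := fun j => (hNindec j).2.2.2
  -- group decompositions from the Borel–Lichnerowicz property
  obtain ⟨Ks, hKsub, hKfix, hKfac⟩ :=
    groups_of_BL B H hBL N hNind hNsup hNorth (fun j => hNinv j) hNnd
  obtain ⟨Hs, hHsub, hHfix, hHfac⟩ :=
    groups_of_BL B H hBL M hMind hMsup hMorth (fun i => hMinv i) hMnd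
  have hKgen : ∀ h ∈ H, ∀ x : V, (∀ j, ∀ k ∈ Ks j, k x = x) → h x = x := by
    intro h hh x hfx
    obtain ⟨l, hl, rfl⟩ := hKfac h hh
    exact list_prod_fix l x (fun a ha => by obtain ⟨j, hj⟩ := hl a ha; exact hfx j a hj)
  have hHgen : ∀ h ∈ H, ∀ x : V, (∀ i, ∀ k ∈ Hs i, k x = x) → h x = x := by
    intro h hh x hfx
    obtain ⟨l, hl, rfl⟩ := hHfac h hh
    exact list_prod_fix l x (fun a ha => by obtain ⟨i, hi⟩ := hl a ha; exact hfx i a hi)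
  have hiso2 : ∀ x y : V, (∀ g ∈ H, g x = x) → (∀ g ∈ H, g y = y) → B x y = 0 :=
    fun x y hx hy => hiso x ⟨Submodule.mem_top, hx⟩ y ⟨Submodule.mem_top, hy⟩
  -- the two matchings
  obtain ⟨σ, hσinj, hσ⟩ :=
    core_match B hsymm H hiso2 hMa hMb hMc hMd hNa hNb hNc hNd hMorth hNorth
      hMne hMnd hMinv hMc4 hNne hNnd hNinv hNc4 Ks hKsub hKfix hKgen
  obtain ⟨τ, hτinj, -⟩ :=
    core_match B hsymm H hiso2 hNa hNb hNc hNd hMa hMb hMc hMd hNorth hMorth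
      hNne hNnd hNinv hNc4 hMne hMnd hMinv hMc4 Hs hHsub hHfix hHgen
  have hpq : p = q := by
    have h1 : p ≤ q := by simpa using Fintype.card_le_of_injective σ hσinj
    have h2 : q ≤ p := by simpa using Fintype.card_le_of_injective τ hτinj
    omega
  have hσbij : Function.Bijective σ :=
    (Fintype.bijective_iff_injective_and_card σ).mpr ⟨hσinj, by simp [hpq]⟩
  refine ⟨hpq, Equiv.ofBijective σ hσbij, ?_, ?_⟩
  · -- per-block conclusions
    intro i
    obtain ⟨hinj_i, hmap_i, hpair_i, hfix_i⟩ := hσ i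
    have hcoe : (Equiv.ofBijective σ hσbij) i = σ i := rfl
    rw [hcoe]
    -- the bijection M i → N (σ i)
    set φ : ↥(M i) →ₗ[ℝ] ↥(N (σ i)) :=
      LinearMap.codRestrict (N (σ i)) ((πN (σ i)) ∘ₗ (M i).subtype)
        (fun v => hNa (σ i) ↑v) with hφ
    have hφcoe : ∀ x : ↥(M i), ((φ x : V)) = πN (σ i) ↑x := fun _ => rfl
    have hφinj : Function.Injective φ := by
      intro a b hab
      have h0 : πN (σ i) ((↑a : V) - ↑b) = 0 := by
        rw [map_sub]
        have : ((φ a : V)) = ((φ b : V)) := by rw [hab]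
        rw [hφcoe, hφcoe] at this
        rw [this, sub_self]
      have hmem : (↑a : V) - ↑b ∈ M i := Submodule.sub_mem _ a.2 b.2
      have := hinj_i _ hmem h0
      exact Subtype.ext (sub_eq_zero.mp this)
    have hφsurj : Function.Surjective φ := by
      intro z
      have hz : (↑z : V) ∈ Submodule.map (πN (σ i)) (M i) := by
        rw [hmap_i]; exact z.2
      obtain ⟨m, hm, hmz⟩ := hz
      exact ⟨⟨m, hm⟩, Subtype.ext hmz⟩
    refine ⟨?_, ?_, ?_⟩
    · -- equal dimensions
      exact LinearEquiv.finrank_eq (LinearEquiv.ofBijective φ ⟨hφinj, hφsurj⟩)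
    · -- equal moved spans
      have hMN0 : ∀ (j : Fin q), j ≠ σ i → ∀ y, y ∈ M i → y ∈ N j → y = 0 :=
        fun j hne y hyM hyN => hinj_i y hyM (hNc (σ i) j (fun h => hne h.symm) y hyN)
      have hNM0 : ∀ (i' : Fin p), i' ≠ i → ∀ y, y ∈ N (σ i) → y ∈ M i' → y = 0 := by
        intro i' hne y hyN hyM
        refine (hσ i').1 y hyM (hNc (σ i') (σ i) (fun h => hne (hσinj h)) y hyN)
      apply le_antisymm
      · refine Submodule.span_le.mpr ?_
        rintro _ ⟨w, hw, g, hg, rfl⟩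
        obtain ⟨l, hl, hgl⟩ := hKfac g hg
        rw [hgl]
        have hsuff : ∀ (l : List (V ≃ₗ[ℝ] V)), (∀ a ∈ l, ∃ j, a ∈ Ks j) →
            ∀ w ∈ M i, l.prod w ∈ M i ∧ w - l.prod w ∈ movedSpan H (N (σ i)) := by
          intro l
          induction l with
          | nil =>
              intro _ w hw
              refine ⟨by simpa using hw, ?_⟩
              have : w - (List.prod [] : V ≃ₗ[ℝ] V) w = 0 := by
                show w - w = 0; rw [sub_self]
              rw [this]
              exact Submodule.zero_mem _
          | cons a t ih =>
              intro hmem w hw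
              have ht := ih (fun b hb => hmem b (List.mem_cons_of_mem _ hb)) w hw
              obtain ⟨j, haK⟩ := hmem a (List.mem_cons_self)
              have haH : a ∈ H := hKsub j haK
              have hprodc : (a :: t).prod w = a (t.prod w) := by rw [List.prod_cons]; rfl
              have hyM : t.prod w ∈ M i := ht.1
              have hayM : a (t.prod w) ∈ M i := hMinv i a haH _ hyM
              refine ⟨by rw [hprodc]; exact hayM, ?_⟩
              rw [hprodc]
              have hsplit : w - a (t.prod w) =
                  (w - t.prod w) + (t.prod w - a (t.prod w)) := by abel
              rw [hsplit]
              refine Submodule.add_mem _ ht.2 ?_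
              have hpc := proj_sub_fix hNa hNd a j
                (fun j' hne' z hz => hKfix j j' hne' a haK z hz) (t.prod w)
              by_cases hj : j = σ i
              · rw [hpc, hj]
                exact Submodule.subset_span ⟨πN (σ i) (t.prod w), hNa (σ i) _, a, haH, rfl⟩
              · have h1 : t.prod w - a (t.prod w) ∈ M i := Submodule.sub_mem _ hyM hayM
                have h2 : t.prod w - a (t.prod w) ∈ N j := by
                  rw [hpc]
                  exact Submodule.sub_mem _ (hNa j _) (hNinv j a haH _ (hNa j _))
                rw [hMN0 j hj _ h1 h2]
                exact Submodule.zero_mem _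
        exact (hsuff l hl w hw).2
      · refine Submodule.span_le.mpr ?_
        rintro _ ⟨w, hw, g, hg, rfl⟩
        obtain ⟨l, hl, hgl⟩ := hHfac g hg
        rw [hgl]
        have hsuff : ∀ (l : List (V ≃ₗ[ℝ] V)), (∀ a ∈ l, ∃ i', a ∈ Hs i') →
            ∀ w ∈ N (σ i), l.prod w ∈ N (σ i) ∧ w - l.prod w ∈ movedSpan H (M i) := by
          intro l
          induction l with
          | nil =>
              intro _ w hw
              refine ⟨by simpa using hw, ?_⟩
              have : w - (List.prod [] : V ≃ₗ[ℝ] V) w = 0 := by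
                show w - w = 0; rw [sub_self]
              rw [this]
              exact Submodule.zero_mem _
          | cons a t ih =>
              intro hmem w hw
              have ht := ih (fun b hb => hmem b (List.mem_cons_of_mem _ hb)) w hw
              obtain ⟨i', haK⟩ := hmem a (List.mem_cons_self)
              have haH : a ∈ H := hHsub i' haK
              have hprodc : (a :: t).prod w = a (t.prod w) := by rw [List.prod_cons]; rfl
              have hyN : t.prod w ∈ N (σ i) := ht.1
              have hayN : a (t.prod w) ∈ N (σ i) := hNinv (σ i) a haH _ hyN
              refine ⟨by rw [hprodc]; exact hayN, ?_⟩
              rw [hprodc]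
              have hsplit : w - a (t.prod w) =
                  (w - t.prod w) + (t.prod w - a (t.prod w)) := by abel
              rw [hsplit]
              refine Submodule.add_mem _ ht.2 ?_
              have hpc := proj_sub_fix hMa hMd a i'
                (fun i'' hne' z hz => hHfix i' i'' hne' a haK z hz) (t.prod w)
              by_cases hi : i' = i
              · rw [hpc, hi]
                exact Submodule.subset_span ⟨πM i (t.prod w), hMa i _, a, haH, rfl⟩
              · have h1 : t.prod w - a (t.prod w) ∈ N (σ i) := Submodule.sub_mem _ hyN hayN
                have h2 : t.prod w - a (t.prod w) ∈ M i' := by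
                  rw [hpc]
                  exact Submodule.sub_mem _ (hMa i' _) (hMinv i' a haH _ (hMa i' _))
                rw [hNM0 i' hi _ h1 h2]
                exact Submodule.zero_mem _
        exact (hsuff l hl w hw).2
    · -- the projection bijection
      refine ⟨φ, ?_, ⟨hφinj, hφsurj⟩, ?_⟩
      · intro x
        have hsum : (↑x : V) - πN (σ i) ↑x = ∑ j ∈ Finset.univ.erase (σ i), πN j ↑x := by
          have h' : (∑ j ∈ Finset.univ.erase (σ i), πN j (↑x : V)) + πN (σ i) ↑x = ↑x := by
            rw [Finset.sum_erase_add Finset.univ _ (Finset.mem_univ (σ i))]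
            exact hNd ↑x
          have := eq_sub_of_add_eq h'
          exact this.symm
        rw [hφcoe, hsum]
        refine Submodule.sum_mem _ ?_
        intro j hj
        have hjne : j ≠ σ i := (Finset.mem_erase.mp hj).1
        exact Submodule.mem_iSup_of_mem j (Submodule.mem_iSup_of_mem hjne (hNa j ↑x))
      · intro x
        have h1 : ((φ x : V)) = πN (σ i) ↑x := hφcoe x
        rw [h1]
        exact hpair_i ↑x x.2 ↑x x.2
  · -- the global isometry
    set Tlin : V →ₗ[ℝ] V := ∑ i, (πN (σ i)) ∘ₗ (πM i) with hTlin
    have hTx : ∀ x, Tlin x = ∑ i', πN (σ i') (πM i' x) := by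
      intro x
      rw [hTlin, LinearMap.sum_apply]
      exact Finset.sum_congr rfl fun i' _ => rfl
    have hTm : ∀ i, ∀ m ∈ M i, Tlin m = πN (σ i) m := by
      intro i m hm
      rw [hTx, Finset.sum_eq_single i]
      · rw [hMb i m hm]
      · intro i' _ hne
        rw [hMc i' i hne m hm, map_zero]
      · intro h; exact absurd (Finset.mem_univ i) h
    have hσne : ∀ {i i' : Fin p}, i ≠ i' → σ i ≠ σ i' :=
      fun {i i'} hne h => hne (hσinj h)
    have hTzero : ∀ x, Tlin x = 0 → x = 0 := by
      intro x hx0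
      have hterm : ∀ i, πN (σ i) (πM i x) = 0 := by
        intro i
        have h1 : πN (σ i) (Tlin x) = πN (σ i) (πM i x) := by
          rw [hTx, map_sum, Finset.sum_eq_single i]
          · rw [hNb (σ i) _ (hNa (σ i) _)]
          · intro i' _ hne
            exact hNc (σ i) (σ i') (hσne (fun h => hne h.symm)) _ (hNa (σ i') _)
          · intro h; exact absurd (Finset.mem_univ i) h
        rw [hx0, map_zero] at h1
        exact h1.symm
      have hMix : ∀ i, πM i x = 0 := fun i => (hσ i).1 (πM i x) (hMa i x) (hterm i)
      calc x = ∑ i, πM i x := (hMd x).symm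
        _ = 0 := Finset.sum_eq_zero fun i _ => hMix i
    have hTinj : Function.Injective Tlin := by
      intro a b hab
      have h1 : Tlin (a - b) = 0 := by rw [map_sub, hab, sub_self]
      exact sub_eq_zero.mp (hTzero _ h1)
    have hTbij : Function.Bijective Tlin :=
      ⟨hTinj, (LinearMap.injective_iff_surjective).mp hTinj⟩
    refine ⟨LinearEquiv.ofBijective Tlin hTbij, ?_, ?_⟩
    · intro x
      have hcoe : (LinearEquiv.ofBijective Tlin hTbij) x = Tlin x := rfl
      rw [hcoe, hTx]
      rw [LinearMap.BilinForm.sum_left]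
      have hterm : ∀ i', B (πN (σ i') (πM i' x)) (∑ i'', πN (σ i'') (πM i'' x)) =
          B (πM i' x) (πM i' x) := by
        intro i'
        rw [map_sum, Finset.sum_eq_single i']
        · exact (hσ i').2.2.1 (πM i' x) (hMa i' x) (πM i' x) (hMa i' x)
        · intro i'' _ hne
          exact hNorth (σ i') (σ i'') (hσne (fun h => hne h.symm)) _ (hNa _ _) _ (hNa _ _)
        · intro h; exact absurd (Finset.mem_univ i') h
      rw [Finset.sum_congr rfl (fun i' _ => hterm i')]
      exact (proj_B_sum B hMa hMd hMorth x x).symm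
    · intro i
      have hcoe : (Equiv.ofBijective σ hσbij) i = σ i := rfl
      rw [hcoe]
      apply le_antisymm
      · intro z hz
        obtain ⟨m, hm, rfl⟩ := hz
        have h1 : ((LinearEquiv.ofBijective Tlin hTbij : V →ₗ[ℝ] V)) m = πN (σ i) m :=
          hTm i m hm
        rw [h1]
        exact hNa (σ i) m
      · intro z hz
        have hz' : z ∈ Submodule.map (πN (σ i)) (M i) := by
          rw [(hσ i).2.1]; exact hz
        obtain ⟨m, hm, hmz⟩ := hz'
        exact ⟨m, hm, by
          have h1 : ((LinearEquiv.ofBijective Tlin hTbij : V →ₗ[ℝ] V)) m = πN (σ i) m :=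
            hTm i m hm
          rw [h1]; exact hmz⟩
end

section
/- Let H be a subgroup of O(V) and let V = M⁰ ⊕ M¹ ⊕ ⋯ ⊕ M^p be a direct-sum decomposition into mutually orthogonal H-invariant subspaces with M⁰ ⊆ V^H and each M^i (1 ≤ i ≤ p) nondegenerate and indecomposable. Assume H is the internal direct product of normal subgroups H¹, …, H^p, where each H^i maps M^i into itself and acts as the identity on M^j for every j ≠ i and on M⁰. If N is a nonzero nondegenerate indecomposable H-invariant subspace of V with N^H = 0, then N ∩ M^k is nonzero and nondegenerate for some 1 ≤ k ≤ p, and in fact N = M^k. -/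
lemma invariantUnder_iSup_s8 {V : Type*} [AddCommGroup V] [Module ℝ V] {ι : Sort*}
    (G : Subgroup (V ≃ₗ[ℝ] V)) (T : ι → Submodule ℝ V)
    (h : ∀ i, InvariantUnder G (T i)) : InvariantUnder G (⨆ i, T i) := by
  intro g hg w hw
  refine Submodule.iSup_induction' T (motive := fun w _ => g w ∈ ⨆ i, T i)
    (fun i x hx => Submodule.mem_iSup_of_mem i (h i g hg x hx)) (by simp)
    (fun x y _ _ hx hy => by
      rw [show g (x + y) = g x + g y from map_add g x y]
      exact add_mem hx hy) hw

/-- STATEMENT 8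
: Given a decomposition `V = M⁰ ⊕ M¹ ⊕ ⋯ ⊕ M^p` into mutually orthogonal
`H`-invariant subspaces with `M⁰ ⊆ V^H` and each `M^i` nondegenerate indecomposable, and
`H` the internal direct product of normal subgroups `H¹, …, H^p` acting accordingly: if
`N` is a nonzero nondegenerate indecomposable `H`-invariant subspace with `N^H = 0`, then
`N ∩ M^k` is nonzero and nondegenerate for some `k`, and in fact `N = M^k`. -/
theorem indecomposable_with_trivial_fixed_is_summand
    {V : Type*} [AddCommGroup V] [Module ℝ V] [FiniteDimensional ℝ V]
    (B : LinearMap.BilinForm ℝ V)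
    (hsymm : ∀ x y : V, B x y = B y x) (hnd : NondegOn B ⊤)
    (H : Subgroup (V ≃ₗ[ℝ] V)) (hH : H ≤ orthogonalGroup B)
    (p : ℕ) (M0 : Submodule ℝ V) (M : Fin p → Submodule ℝ V)
    (hind : iSupIndep (Fin.cons M0 M : Fin (p + 1) → Submodule ℝ V))
    (hsup : iSup (Fin.cons M0 M : Fin (p + 1) → Submodule ℝ V) = ⊤)
    (horth : ∀ i j : Fin (p + 1), i ≠ j →
      ∀ x ∈ (Fin.cons M0 M : Fin (p + 1) → Submodule ℝ V) i,
      ∀ y ∈ (Fin.cons M0 M : Fin (p + 1) → Submodule ℝ V) j, B x y = 0)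
    (hM0 : M0 ≤ fixedSubspace H ⊤) (hM0inv : InvariantUnder H M0)
    (hMindec : ∀ i, IsIndecomposable B H (M i))
    (Hs : Fin p → Subgroup (V ≃ₗ[ℝ] V))
    (hHs : IsInternalDirectProduct H Hs)
    (hHact : ∀ i, (∀ g ∈ Hs i, ∀ x ∈ M i, g x ∈ M i) ∧
      (∀ j, j ≠ i → ∀ g ∈ Hs i, ∀ x ∈ M j, g x = x) ∧
      (∀ g ∈ Hs i, ∀ x ∈ M0, g x = x))
    (N : Submodule ℝ V) (hN : IsIndecomposable B H N)
    (hNfix : fixedSubspace H N = ⊥) :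
    ∃ k, N ⊓ M k ≠ ⊥ ∧ NondegOn B (N ⊓ M k) ∧ N = M k := by
  classical
  obtain ⟨hNne, hNnd, hNinv, hNindec⟩ := hN
  -- Step 1: for `g ∈ Hs i`, `g m - m ∈ M i` for every `m`
  have h1 : ∀ i : Fin p, ∀ g ∈ Hs i, ∀ m : V, g m - m ∈ M i := by
    intro i g hg m
    have hm : m ∈ ⨆ j, (Fin.cons M0 M : Fin (p + 1) → Submodule ℝ V) j := by
      rw [hsup]; exact Submodule.mem_top
    refine Submodule.iSup_induction' _ (motive := fun m _ => g m - m ∈ M i) ?_ ?_ ?_ hm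
    · intro j x hx
      induction j using Fin.cases with
      | zero =>
        rw [Fin.cons_zero] at hx
        rw [(hHact i).2.2 g hg x hx]; simp
      | succ l =>
        rw [Fin.cons_succ] at hx
        by_cases hl : l = i
        · subst hl
          exact sub_mem ((hHact l).1 g hg x hx) hx
        · rw [(hHact i).2.1 l hl g hg x hx]; simp
    · simp
    · intro x y _ _ hx hy
      have e : g (x + y) - (x + y) = (g x - x) + (g y - y) := by
        rw [map_add]; abel
      rw [e]; exact add_mem hx hy
  set W : Submodule ℝ V := ⨆ i : Fin p, (N ⊓ M i) with hWdef
  have hWleN : W ≤ N := iSup_le fun i => inf_le_left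
  have hstep : ∀ i : Fin p, ∀ g ∈ Hs i, ∀ n ∈ N, g n - n ∈ W := by
    intro i g hg n hn
    have hgH : g ∈ H := hHs.1 i hg
    exact Submodule.mem_iSup_of_mem i ⟨sub_mem (hNinv g hgH n hn) hn, h1 i g hg n⟩
  have hlist : ∀ L : List (V ≃ₗ[ℝ] V), (∀ g ∈ L, ∃ i, g ∈ Hs i) →
      ∀ n ∈ N, L.prod n ∈ N ∧ L.prod n - n ∈ W := by
    intro L
    induction L with
    | nil =>
      intro _ n hn
      refine ⟨hn, ?_⟩
      simp
    | cons g T ih =>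
      intro hmem n hn
      obtain ⟨i, hgi⟩ := hmem g (List.mem_cons_self (a := g) (l := T))
      have hT := ih (fun x hx => hmem x (List.mem_cons_of_mem g hx)) n hn
      have hgH : g ∈ H := hHs.1 i hgi
      have happ : (g :: T).prod n = g (T.prod n) := by
        rw [List.prod_cons]; rfl
      refine ⟨?_, ?_⟩
      · rw [happ]; exact hNinv g hgH _ hT.1
      · rw [happ]
        have e : g (T.prod n) - n = (g (T.prod n) - T.prod n) + (T.prod n - n) := by abel
        rw [e]
        exact add_mem (hstep i g hgi _ hT.1) hT.2
  have hHmove : ∀ h ∈ H, ∀ n ∈ N, h n - n ∈ W := by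
    intro h hh n hn
    obtain ⟨f, hf, -⟩ := hHs.2.2.2 h hh
    rw [hf]
    refine (hlist _ ?_ n hn).2
    intro g hg
    rw [List.mem_ofFn] at hg
    obtain ⟨i, rfl⟩ := hg
    exact ⟨i, (f i).2⟩
  -- Step 3: kernel of the map N → W* is zero
  have hker : ∀ n ∈ N, (∀ w ∈ W, B n w = 0) → n = 0 := by
    intro n hn h0
    have key : ∀ h ∈ H, h n = n := by
      intro h hh
      have hfix : ∀ m ∈ N, B (h n - n) m = 0 := by
        intro m hm
        have hmm : h (h⁻¹ m) = m := h.apply_symm_apply m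
        have e1 : B (h n) m = B n (h⁻¹ m) := by
          have := hH hh n (h⁻¹ m)
          rw [hmm] at this
          exact this
        have e2 : B n (h⁻¹ m - m) = 0 := h0 _ (hHmove h⁻¹ (H.inv_mem hh) m hm)
        have e3 : B (h n - n) m = B (h n) m - B n m := by
          rw [map_sub]; rfl
        rw [e3, e1, ← map_sub (B n)]
        exact e2
      have := hNnd (h n - n) (sub_mem (hNinv h hh n hn) hn) hfix
      exact sub_eq_zero.mp this
    have hnfix : n ∈ fixedSubspace H N := ⟨hn, key⟩
    rw [hNfix] at hnfix
    simpa using hnfix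
  -- Step 4: N = W
  have hNW : N = W := by
    have hinj : Function.Injective (B.domRestrict₁₂ N W) := by
      rw [← LinearMap.ker_eq_bot]
      rw [Submodule.eq_bot_iff]
      intro n hnk
      rw [LinearMap.mem_ker] at hnk
      have hz : ∀ w ∈ W, B (n : V) w = 0 := by
        intro w hw
        have := LinearMap.congr_fun hnk ⟨w, hw⟩
        simpa [LinearMap.domRestrict₁₂_apply] using this
      exact Subtype.ext (hker n n.2 hz)
    have hfin : Module.finrank ℝ N ≤ Module.finrank ℝ W :=
      le_trans (LinearMap.finrank_le_finrank_of_injective hinj)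
        (le_of_eq Subspace.dual_finrank_eq)
    exact (Submodule.eq_of_le_of_finrank_le hWleN hfin).symm
  -- pick k with N ⊓ M k ≠ ⊥
  obtain ⟨k, hk⟩ : ∃ k : Fin p, N ⊓ M k ≠ ⊥ := by
    by_contra hc
    push_neg at hc
    apply hNne
    rw [hNW, hWdef]
    exact iSup_eq_bot.2 hc
  set U₂ : Submodule ℝ V := ⨆ j : {j : Fin p // j ≠ k}, (N ⊓ M (j : Fin p)) with hU2
  have hsupU : (N ⊓ M k) ⊔ U₂ = N := by
    apply le_antisymm
    · exact sup_le inf_le_left (iSup_le fun j => inf_le_left)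
    · refine hNW.le.trans (iSup_le fun j => ?_)
      by_cases hj : j = k
      · subst hj; exact le_sup_of_le_left le_rfl
      · exact le_sup_of_le_right
          (le_iSup (fun j : {j : Fin p // j ≠ k} => N ⊓ M (j : Fin p)) ⟨j, hj⟩)
  have hdisU : (N ⊓ M k) ⊓ U₂ = ⊥ := by
    have hMdis := hind k.succ
    have ha : (N ⊓ M k) ≤ (Fin.cons M0 M : Fin (p + 1) → Submodule ℝ V) k.succ := by
      rw [Fin.cons_succ]; exact inf_le_right
    have hb : U₂ ≤ ⨆ j, ⨆ _ : j ≠ k.succ,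
        (Fin.cons M0 M : Fin (p + 1) → Submodule ℝ V) j := by
      refine iSup_le fun j => inf_le_right.trans ?_
      have e : M (j : Fin p)
          = (Fin.cons M0 M : Fin (p + 1) → Submodule ℝ V) (j : Fin p).succ := by
        rw [Fin.cons_succ]
      rw [e]
      exact le_iSup₂_of_le (j : Fin p).succ
        (fun h => j.2 (Fin.succ_injective p h)) le_rfl
    exact (Disjoint.mono ha hb hMdis).eq_bot
  have hinvU1 : InvariantUnder H (N ⊓ M k) := fun g hg w hw =>
    ⟨hNinv g hg w hw.1, (hMindec k).2.2.1 g hg w hw.2⟩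
  have hinvU2 : InvariantUnder H U₂ := invariantUnder_iSup_s8 H _ (fun j g hg w hw =>
    ⟨hNinv g hg w hw.1, (hMindec (j : Fin p)).2.2.1 g hg w hw.2⟩)
  have horthU : ∀ x ∈ (N ⊓ M k), ∀ y ∈ U₂, B x y = 0 := by
    intro x hx y hy
    have hle : U₂ ≤ LinearMap.ker (B x) := by
      refine iSup_le fun j => ?_
      intro u hu
      rw [LinearMap.mem_ker]
      exact horth k.succ (j : Fin p).succ
        (fun h => j.2 (Fin.succ_injective p h).symm) x
        (by rw [Fin.cons_succ]; exact hx.2) u (by rw [Fin.cons_succ]; exact hu.2)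
    exact LinearMap.mem_ker.mp (hle hy)
  have hndU1 : NondegOn B (N ⊓ M k) := by
    intro w hw h0
    apply hNnd w hw.1
    intro u hu
    have hle : N ≤ LinearMap.ker (B w) := by
      rw [← hsupU]
      refine sup_le (fun u hu => ?_) (fun u hu => ?_)
      · rw [LinearMap.mem_ker]; exact h0 u hu
      · rw [LinearMap.mem_ker]; exact horthU w hw u hu
    exact LinearMap.mem_ker.mp (hle hu)
  have hU2N : U₂ ≤ N := iSup_le fun j => inf_le_left
  have hndU2 : NondegOn B U₂ := by
    intro w hw h0
    apply hNnd w (hU2N hw)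
    intro u hu
    rw [← hsupU] at hu
    obtain ⟨a, ha, b, hb, rfl⟩ := Submodule.mem_sup.1 hu
    have e1 : B w a = 0 := by rw [hsymm]; exact horthU a ha w hw
    have e2 : B w b = 0 := h0 b hb
    rw [map_add, e1, e2, add_zero]
  rcases hNindec (N ⊓ M k) U₂ hsupU hdisU hinvU1 hinvU2 hndU1 hndU2 horthU with h | h
  · exact absurd h hk
  have hNMk : N = N ⊓ M k := by
    rw [h, sup_bot_eq] at hsupU
    exact hsupU.symm
  have hNle : N ≤ M k := hNMk.le.trans inf_le_right
  -- final stage: N = M k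
  obtain ⟨hMne, hMnd, hMinv, hMindec'⟩ := hMindec k
  have hrefl : B.IsRefl := fun x y hxy => by rw [hsymm]; exact hxy
  have hndres : (B.restrict N).Nondegenerate := by
    refine ⟨fun n hn0 => ?_, fun n hn0 => ?_⟩
    refine Subtype.ext (hNnd n n.2 fun u hu => ?_)
    simpa using hn0 ⟨u, hu⟩
    refine Subtype.ext (hNnd n n.2 fun u hu => ?_)
    rw [hsymm]; simpa using hn0 ⟨u, hu⟩
  have hcompl : IsCompl N (B.orthogonal N) :=
    (LinearMap.BilinForm.restrict_nondegenerate_iff_isCompl_orthogonal hrefl).1 hndres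
  set O : Submodule ℝ V := M k ⊓ B.orthogonal N with hOdef
  have horthN : ∀ x ∈ N, ∀ y ∈ O, B x y = 0 := by
    intro x hx y hy
    exact (LinearMap.BilinForm.mem_orthogonal_iff.mp hy.2) x hx
  have hsup2 : N ⊔ O = M k := by
    apply le_antisymm (sup_le hNle inf_le_left)
    intro m hm
    have hmem : m ∈ N ⊔ B.orthogonal N := by rw [hcompl.sup_eq_top]; trivial
    obtain ⟨a, ha, b, hb, rfl⟩ := Submodule.mem_sup.1 hmem
    refine Submodule.add_mem _ (Submodule.mem_sup_left ha) (Submodule.mem_sup_right ⟨?_, hb⟩)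
    have e : b = (a + b) - a := by abel
    rw [e]
    exact Submodule.sub_mem _ hm (hNle ha)
  have hinf2 : N ⊓ O = ⊥ := by
    have hle : N ⊓ O ≤ N ⊓ B.orthogonal N := inf_le_inf_left N inf_le_right
    rw [hcompl.inf_eq_bot] at hle
    exact le_bot_iff.1 hle
  have hinvO : InvariantUnder H O := by
    intro g hg w hw
    have hgw : g w ∈ B.orthogonal N := by
      rw [LinearMap.BilinForm.mem_orthogonal_iff]
      intro n hn
      have hginv : g⁻¹ ∈ H := H.inv_mem hg
      have e : B n (g w) = B (g⁻¹ n) w := by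
        have e0 : g (g⁻¹ n) = n := g.apply_symm_apply n
        have := hH hg (g⁻¹ n) w
        rw [e0] at this
        exact this
      have hz : B (g⁻¹ n) w = 0 :=
        (LinearMap.BilinForm.mem_orthogonal_iff.mp hw.2) (g⁻¹ n) (hNinv g⁻¹ hginv n hn)
      show B n (g w) = 0
      rw [e]; exact hz
    exact ⟨hMinv g hg w hw.1, hgw⟩
  have hndO : NondegOn B O := by
    intro w hw h0
    apply hMnd w hw.1
    intro u hu
    rw [← hsup2] at hu
    obtain ⟨a, ha, b, hb, rfl⟩ := Submodule.mem_sup.1 hu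
    have e1 : B w a = 0 := by rw [hsymm]; exact horthN a ha w hw
    have e2 : B w b = 0 := h0 b hb
    rw [map_add, e1, e2, add_zero]
  rcases hMindec' N O hsup2 hinf2 hNinv hinvO hNnd hndO horthN with h' | h'
  · exact absurd h' hNne
  have hfinal : N = M k := by rw [← hsup2, h', sup_bot_eq]
  refine ⟨k, hk, ?_, hfinal⟩
  rw [← hNMk]
  exact hNnd
end

section
/- Let H be a subgroup of O(V). Then V admits an orthogonal direct-sum decomposition V = V⁰ ⊕ V¹ into H-invariant subspaces such that V⁰ ⊆ V^H is nondegenerate and (V¹)^H is totally isotropic. More precisely, if V⁰ is any nondegenerate subspace of V^H that is maximal under inclusion among nondegenerate subspaces of V^H, then the orthogonal complement V¹ = (V⁰)^⊥ is H-invariant, V = V⁰ ⊕ V¹, and (V¹)^H is totally isotropic. -/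
/-- `V` admits an orthogonal direct-sum decomposition `V = V⁰ ⊕ V¹` into
`H`-invariant subspaces with `V⁰ ⊆ V^H` nondegenerate and `(V¹)^H` totally isotropic;
more precisely, for any maximal nondegenerate subspace `V⁰` of `V^H`, its orthogonal
complement `V¹` is `H`-invariant, `V = V⁰ ⊕ V¹`, and `(V¹)^H` is totally isotropic. -/
theorem exists_flat_isotropic_splitting
    {V : Type*} [AddCommGroup V] [Module ℝ V] [FiniteDimensional ℝ V]
    (B : LinearMap.BilinForm ℝ V)
    (hsymm : ∀ x y : V, B x y = B y x) (hnd : NondegOn B ⊤)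
    (H : Subgroup (V ≃ₗ[ℝ] V)) (hH : H ≤ orthogonalGroup B) :
    (∃ V0 V1 : Submodule ℝ V,
      V0 ≤ fixedSubspace H ⊤ ∧ NondegOn B V0 ∧
      InvariantUnder H V0 ∧ InvariantUnder H V1 ∧
      V0 ⊓ V1 = ⊥ ∧ V0 ⊔ V1 = ⊤ ∧
      (∀ x ∈ V0, ∀ y ∈ V1, B x y = 0) ∧
      TotallyIsotropic B (fixedSubspace H V1)) ∧
    ∀ V0 : Submodule ℝ V, IsMaxNondegIn B (fixedSubspace H ⊤) V0 →
      InvariantUnder H (B.orthogonal V0) ∧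
      V0 ⊓ B.orthogonal V0 = ⊥ ∧ V0 ⊔ B.orthogonal V0 = ⊤ ∧
      TotallyIsotropic B (fixedSubspace H (B.orthogonal V0)) := by
  have hrefl : B.IsRefl := fun x y h => by rw [hsymm]; exact h
  have main : ∀ V0 : Submodule ℝ V, IsMaxNondegIn B (fixedSubspace H ⊤) V0 →
      InvariantUnder H (B.orthogonal V0) ∧
      V0 ⊓ B.orthogonal V0 = ⊥ ∧ V0 ⊔ B.orthogonal V0 = ⊤ ∧
      TotallyIsotropic B (fixedSubspace H (B.orthogonal V0)) := by
    rintro V0 ⟨hle, hndV0, hmaxm⟩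
    have hres : (B.restrict V0).Nondegenerate := by
      refine ⟨?_, ?_⟩
      · rintro ⟨w, hw⟩ h
        exact Subtype.ext (hndV0 w hw fun u hu => h ⟨u, hu⟩)
      · rintro ⟨w, hw⟩ h
        exact Subtype.ext (hndV0 w hw fun u hu => (hsymm w u).trans (h ⟨u, hu⟩))
    have hcompl := B.isCompl_orthogonal_of_restrict_nondegenerate hrefl hres
    have hfix : ∀ w ∈ V0, ∀ g' ∈ H, (g' : V ≃ₗ[ℝ] V) w = w := fun w hw g' hg' =>
      (hle hw).2 g' hg'
    refine ⟨?_, hcompl.inf_eq_bot, hcompl.sup_eq_top, ?_⟩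
    · intro g hg x hx n hn
      have hginv : g⁻¹ ∈ H := H.inv_mem hg
      have h1 : B (g (g⁻¹ n)) (g x) = B (g⁻¹ n) x := hH hg _ _
      have h2 : g (g⁻¹ n) = n := g.apply_symm_apply n
      have h3 : (g⁻¹ : V ≃ₗ[ℝ] V) n = n := hfix n hn g⁻¹ hginv
      have hBn : B n (g x) = B n x := by
        conv_lhs => rw [← h2]
        rw [h1, h3]
      show B n (g x) = 0
      rw [hBn]
      exact hx n hn
    · intro x hx y hy
      by_contra hxy
      obtain ⟨z, hz, hzz⟩ : ∃ z ∈ fixedSubspace H (B.orthogonal V0), B z z ≠ 0 := by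
        by_cases h1 : B x x ≠ 0
        · exact ⟨x, hx, h1⟩
        by_cases h2 : B y y ≠ 0
        · exact ⟨y, hy, h2⟩
        push_neg at h1 h2
        refine ⟨x + y, (fixedSubspace H _).add_mem hx hy, ?_⟩
        have hexp : B (x + y) (x + y) = B x x + B x y + (B y x + B y y) := by
          rw [map_add]; simp [LinearMap.add_apply]; ring
        rw [hexp, h1, h2, hsymm y x]
        intro h; apply hxy; linarith
      have hzV1 : z ∈ B.orthogonal V0 := hz.1
      have hzfix : ∀ g ∈ H, (g : V ≃ₗ[ℝ] V) z = z := hz.2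
      set W' : Submodule ℝ V := V0 ⊔ Submodule.span ℝ {z} with hW'
      have hzW' : z ∈ W' := Submodule.mem_sup_right (Submodule.mem_span_singleton_self z)
      have hW'le : W' ≤ fixedSubspace H ⊤ := by
        refine sup_le hle ?_
        rw [Submodule.span_le, Set.singleton_subset_iff]
        exact ⟨Submodule.mem_top, hzfix⟩
      have hW'nd : NondegOn B W' := by
        intro w hw hort
        obtain ⟨v, hv, u, hu, rfl⟩ := Submodule.mem_sup.mp hw
        obtain ⟨c, rfl⟩ := Submodule.mem_span_singleton.mp hu
        have hvz : B v z = 0 := hzV1 v hv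
        have hwz : B (v + c • z) z = 0 := hort z hzW'
        have hcz : c * B z z = 0 := by
          rw [map_add, LinearMap.add_apply, map_smul] at hwz
          simpa [hvz] using hwz
        have hc : c = 0 := by
          rcases mul_eq_zero.mp hcz with h | h
          · exact h
          · exact absurd h hzz
        rw [hc, zero_smul, add_zero] at hort ⊢
        exact hndV0 v hv fun u hu => hort u (Submodule.mem_sup_left hu)
      have heq : W' = V0 := hmaxm W' hW'le hW'nd le_sup_left
      have hzV0 : z ∈ V0 := heq ▸ hzW'
      exact hzz (hzV1 z hzV0)
  refine ⟨?_, main⟩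
  obtain ⟨V0, hV0S, hV0max⟩ :
      ∃ W ∈ {W : Submodule ℝ V | W ≤ fixedSubspace H ⊤ ∧ NondegOn B W},
        ∀ W' ∈ {W : Submodule ℝ V | W ≤ fixedSubspace H ⊤ ∧ NondegOn B W}, ¬ W' > W :=
    (isNoetherian_iff.mp (inferInstance : IsNoetherian ℝ V)).has_min _
      ⟨⊥, bot_le, fun w hw _ => hw⟩
  have hmax : IsMaxNondegIn B (fixedSubspace H ⊤) V0 := by
    refine ⟨hV0S.1, hV0S.2, fun W' hle' hnd' hsub => ?_⟩
    by_contra hne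
    exact hV0max W' ⟨hle', hnd'⟩ (lt_of_le_of_ne hsub (Ne.symm hne))
  obtain ⟨hinv, hinf, hsup, hiso⟩ := main V0 hmax
  refine ⟨V0, B.orthogonal V0, hV0S.1, hV0S.2, ?_, hinv, hinf, hsup, ?_, hiso⟩
  · intro g hg w hw
    rw [(hV0S.1 hw).2 g hg]; exact hw
  · intro x hx y hy
    exact hy x hx
end

section
/- Let H be a subgroup of O(V). Then V admits a direct-sum decomposition V = M⁰ ⊕ M¹ ⊕ ⋯ ⊕ M^{p₁} ⊕ M^{p₁+1} ⊕ ⋯ ⊕ M^{p₁+p₂} into mutually orthogonal H-invariant subspaces such that: M⁰ is a maximal nondegenerate subspace of V^H (maximal under inclusion among nondegenerate subspaces of V^H); each M^i (1 ≤ i ≤ p₁+p₂) is nondegenerate and indecomposable; (M^i)^H = 0 for 1 ≤ i ≤ p₁; and (M^i)^H is nonzero and totally isotropic for p₁ < i ≤ p₁+p₂. -/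
section AuxLemmas

variable {V : Type*} [AddCommGroup V] [Module ℝ V]

lemma mem_fixedSubspace {H : Subgroup (V ≃ₗ[ℝ] V)} {W : Submodule ℝ V} {x : V} :
    x ∈ fixedSubspace H W ↔ x ∈ W ∧ ∀ g ∈ H, g x = x := Iff.rfl

lemma nondegOn_iff_restrict (B : LinearMap.BilinForm ℝ V) (W : Submodule ℝ V) :
    NondegOn B W ↔ (B.restrict W).SeparatingLeft := by
  constructor
  · intro h x hx
    exact Subtype.ext (h x x.2 fun u hu => hx ⟨u, hu⟩)
  · intro h w hw hperp
    exact congrArg Subtype.val (h ⟨w, hw⟩ fun u => hperp u u.2)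

lemma exists_max_nondeg [FiniteDimensional ℝ V] (B : LinearMap.BilinForm ℝ V)
    (U : Submodule ℝ V) : ∃ M0 : Submodule ℝ V, IsMaxNondegIn B U M0 := by
  have hno : IsNoetherian ℝ V := inferInstance
  obtain ⟨M0, hM0, hmax⟩ := (set_has_maximal_iff_noetherian.mpr hno)
    {W | W ≤ U ∧ NondegOn B W} ⟨⊥, bot_le, fun w hw _ => hw⟩
  refine ⟨M0, hM0.1, hM0.2, fun W' hW'U hW'nd hle => ?_⟩
  by_contra hne
  exact hmax W' ⟨hW'U, hW'nd⟩ (lt_of_le_of_ne hle fun h => hne h.symm)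

lemma invariant_orthogonal (B : LinearMap.BilinForm ℝ V) {H : Subgroup (V ≃ₗ[ℝ] V)}
    (hH : H ≤ orthogonalGroup B) {W : Submodule ℝ V} (hW : InvariantUnder H W) :
    InvariantUnder H (B.orthogonal W) := by
  intro g hg v hv
  rw [LinearMap.BilinForm.mem_orthogonal_iff]
  intro n hn
  have hinv : (g⁻¹ : V ≃ₗ[ℝ] V) n ∈ W := hW g⁻¹ (H.inv_mem hg) n hn
  have h2 := hH hg ((g⁻¹ : V ≃ₗ[ℝ] V) n) v
  rw [show g (g⁻¹ n) = n from g.apply_symm_apply n] at h2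
  show B n (g v) = 0
  rw [h2]
  exact hv _ hinv

lemma isotropic_of_max (B : LinearMap.BilinForm ℝ V)
    (hsymm : ∀ x y : V, B x y = B y x) {F M0 N : Submodule ℝ V}
    (hmax : IsMaxNondegIn B F M0)
    (hNF : N ≤ F) (horth : ∀ x ∈ M0, ∀ y ∈ N, B x y = 0) :
    TotallyIsotropic B N := by
  intro x hx y hy
  by_contra hne
  have hw : ∃ w ∈ N, B w w ≠ 0 := by
    by_cases h1 : B x x = 0
    · by_cases h2 : B y y = 0
      · refine ⟨x + y, N.add_mem hx hy, ?_⟩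
        have hcalc : B (x + y) (x + y) = B x y + B x y := by
          simp only [map_add, LinearMap.add_apply]
          rw [h1, h2, hsymm y x]; ring
        rw [hcalc]
        intro h0
        exact hne (by linarith)
      · exact ⟨y, hy, h2⟩
    · exact ⟨x, hx, h1⟩
  obtain ⟨w, hwN, hww⟩ := hw
  have hwM0 : ∀ m ∈ M0, B m w = 0 := fun m hm => horth m hm w hwN
  have hle : M0 ⊔ (ℝ ∙ w) ≤ F :=
    sup_le hmax.1 ((Submodule.span_singleton_le_iff_mem _ _).mpr (hNF hwN))
  have hndeg : NondegOn B (M0 ⊔ (ℝ ∙ w)) := by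
    intro v hv hperp
    obtain ⟨m, hm, s, hs, rfl⟩ := Submodule.mem_sup.mp hv
    obtain ⟨c, rfl⟩ := Submodule.mem_span_singleton.mp hs
    have hm0 : m = 0 := by
      apply hmax.2.1 m hm
      intro u hu
      have h1 := hperp u (Submodule.mem_sup_left hu)
      rw [map_add, LinearMap.add_apply, map_smul, LinearMap.smul_apply, smul_eq_mul] at h1
      rw [hsymm w u] at h1
      rw [hwM0 u hu, mul_zero, add_zero] at h1
      exact h1
    subst hm0
    have h2 := hperp w (Submodule.mem_sup_right (Submodule.mem_span_singleton_self w))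
    rw [map_add, LinearMap.add_apply, map_smul, LinearMap.smul_apply, smul_eq_mul,
      map_zero, LinearMap.zero_apply, zero_add] at h2
    have hc : c = 0 := by
      rcases mul_eq_zero.mp h2 with h | h
      · exact h
      · exact absurd h hww
    rw [hc, zero_smul, zero_add]
  have heq : M0 ⊔ (ℝ ∙ w) = M0 := hmax.2.2 _ hle hndeg le_sup_left
  have hwM : w ∈ M0 := heq ▸ Submodule.mem_sup_right (Submodule.mem_span_singleton_self w)
  exact hww (horth w hwM w hwN)

lemma indep_of_orth (B : LinearMap.BilinForm ℝ V)
    (hsymm : ∀ x y : V, B x y = B y x) {m : ℕ} (U : Fin m → Submodule ℝ V)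
    (hN : ∀ i, NondegOn B (U i))
    (ho : ∀ i j, i ≠ j → ∀ x ∈ U i, ∀ y ∈ U j, B x y = 0) : iSupIndep U := by
  intro i
  rw [Submodule.disjoint_def]
  intro x hxi hxs
  have hle : (⨆ j, ⨆ _ : j ≠ i, U j) ≤ B.orthogonal (U i) := by
    refine iSup_le fun j => iSup_le fun hj y hy => ?_
    rw [LinearMap.BilinForm.mem_orthogonal_iff]
    intro u hu
    exact ho i j (Ne.symm hj) u hu y hy
  have hx2 := hle hxs
  refine hN i x hxi fun u hu => ?_
  rw [hsymm]
  exact hx2 u hu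

lemma exists_indecomp_list [FiniteDimensional ℝ V] (B : LinearMap.BilinForm ℝ V)
    (hsymm : ∀ x y : V, B x y = B y x) (H : Subgroup (V ≃ₗ[ℝ] V)) :
    ∀ (n : ℕ) (W : Submodule ℝ V), Module.finrank ℝ W ≤ n → NondegOn B W →
      InvariantUnder H W →
    ∃ L : List (Submodule ℝ V),
      (∀ N ∈ L, IsIndecomposable B H N ∧ N ≤ W) ∧
      L.Pairwise (fun N N' => ∀ x ∈ N, ∀ y ∈ N', B x y = 0) ∧
      sSup {N | N ∈ L} = W := by
  intro n
  induction n with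
  | zero =>
    intro W hr _ _
    have hbot : W = ⊥ := Submodule.finrank_eq_zero.mp (Nat.le_zero.mp hr)
    refine ⟨[], by simp, by simp, ?_⟩
    rw [show {N : Submodule ℝ V | N ∈ ([] : List (Submodule ℝ V))} = ∅ from by ext; simp]
    rw [sSup_empty, hbot]
  | succ n ih =>
    intro W hr hnd hinv
    by_cases hbot : W = ⊥
    · refine ⟨[], by simp, by simp, ?_⟩
      rw [show {N : Submodule ℝ V | N ∈ ([] : List (Submodule ℝ V))} = ∅ from by ext; simp]
      rw [sSup_empty, hbot]
    by_cases hdec : ∀ U₁ U₂ : Submodule ℝ V, U₁ ⊔ U₂ = W → U₁ ⊓ U₂ = ⊥ →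
        InvariantUnder H U₁ → InvariantUnder H U₂ → NondegOn B U₁ → NondegOn B U₂ →
        (∀ x ∈ U₁, ∀ y ∈ U₂, B x y = 0) → U₁ = ⊥ ∨ U₂ = ⊥
    · refine ⟨[W], ?_, by simp, ?_⟩
      · intro N hN
        rw [List.mem_singleton] at hN
        subst hN
        exact ⟨⟨hbot, hnd, hinv, hdec⟩, le_rfl⟩
      · rw [show {N : Submodule ℝ V | N ∈ [W]} = {W} from by ext; simp]
        exact sSup_singleton
    · push_neg at hdec
      obtain ⟨U₁, U₂, hsup, hinf, hi1, hi2, hn1, hn2, horth, hb1, hb2⟩ := hdec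
      have hrank := Submodule.finrank_sup_add_finrank_inf_eq U₁ U₂
      rw [hsup, hinf, finrank_bot, add_zero] at hrank
      have h1pos : 0 < Module.finrank ℝ U₁ :=
        Nat.pos_of_ne_zero fun h => hb1 (Submodule.finrank_eq_zero.mp h)
      have h2pos : 0 < Module.finrank ℝ U₂ :=
        Nat.pos_of_ne_zero fun h => hb2 (Submodule.finrank_eq_zero.mp h)
      obtain ⟨L₁, hL₁, hp₁, hs₁⟩ := ih U₁ (by omega) hn1 hi1
      obtain ⟨L₂, hL₂, hp₂, hs₂⟩ := ih U₂ (by omega) hn2 hi2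
      refine ⟨L₁ ++ L₂, ?_, ?_, ?_⟩
      · intro N hN
        rcases List.mem_append.mp hN with h | h
        · exact ⟨(hL₁ N h).1, le_trans (hL₁ N h).2 (hsup ▸ le_sup_left)⟩
        · exact ⟨(hL₂ N h).1, le_trans (hL₂ N h).2 (hsup ▸ le_sup_right)⟩
      · rw [List.pairwise_append]
        exact ⟨hp₁, hp₂, fun N hN N' hN' x hx y hy =>
          horth x ((hL₁ N hN).2 hx) y ((hL₂ N' hN').2 hy)⟩
      · rw [show {N : Submodule ℝ V | N ∈ L₁ ++ L₂} =
            {N | N ∈ L₁} ∪ {N | N ∈ L₂} from by ext; simp]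
        rw [sSup_union, hs₁, hs₂, hsup]

end AuxLemmas

/-- Existence of the full decomposition
`V = M⁰ ⊕ M¹ ⊕ ⋯ ⊕ M^{p₁} ⊕ M^{p₁+1} ⊕ ⋯ ⊕ M^{p₁+p₂}` into mutually orthogonal
`H`-invariant subspaces with `M⁰` a maximal nondegenerate subspace of `V^H`, each `M^i`
nondegenerate indecomposable, `(M^i)^H = 0` for `i ≤ p₁` and `(M^i)^H` nonzero totally
isotropic for `i > p₁`. -/
theorem exists_full_decomposition
    {V : Type*} [AddCommGroup V] [Module ℝ V] [FiniteDimensional ℝ V]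
    (B : LinearMap.BilinForm ℝ V)
    (hsymm : ∀ x y : V, B x y = B y x) (hnd : NondegOn B ⊤)
    (H : Subgroup (V ≃ₗ[ℝ] V)) (hH : H ≤ orthogonalGroup B) :
    ∃ (p₁ p₂ : ℕ) (M0 : Submodule ℝ V) (M : Fin (p₁ + p₂) → Submodule ℝ V),
      IsMaxNondegIn B (fixedSubspace H ⊤) M0 ∧
      InvariantUnder H M0 ∧
      iSupIndep (Fin.cons M0 M : Fin (p₁ + p₂ + 1) → Submodule ℝ V) ∧
      iSup (Fin.cons M0 M : Fin (p₁ + p₂ + 1) → Submodule ℝ V) = ⊤ ∧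
      (∀ i j : Fin (p₁ + p₂ + 1), i ≠ j →
        ∀ x ∈ (Fin.cons M0 M : Fin (p₁ + p₂ + 1) → Submodule ℝ V) i,
        ∀ y ∈ (Fin.cons M0 M : Fin (p₁ + p₂ + 1) → Submodule ℝ V) j, B x y = 0) ∧
      (∀ i, IsIndecomposable B H (M i)) ∧
      (∀ i : Fin (p₁ + p₂), (i : ℕ) < p₁ → fixedSubspace H (M i) = ⊥) ∧
      (∀ i : Fin (p₁ + p₂), p₁ ≤ (i : ℕ) →
        fixedSubspace H (M i) ≠ ⊥ ∧ TotallyIsotropic B (fixedSubspace H (M i))) := by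
  classical
  obtain ⟨M0, hmax⟩ := exists_max_nondeg B (fixedSubspace H ⊤)
  have hM0F : M0 ≤ fixedSubspace H ⊤ := hmax.1
  have hM0inv : InvariantUnder H M0 := fun g hg w hw => by
    rw [(hM0F hw).2 g hg]; exact hw
  have hrefl : B.IsRefl := fun x y h => by rw [hsymm]; exact h
  have hcompl : IsCompl M0 (B.orthogonal M0) :=
    LinearMap.BilinForm.isCompl_orthogonal_of_restrict_nondegenerate hrefl
      ⟨(nondegOn_iff_restrict B M0).mp hmax.2.1, fun y hy =>
        (nondegOn_iff_restrict B M0).mp hmax.2.1 y fun x => by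
          show B y x = 0; rw [hsymm]; exact hy x⟩
  have hWcinv : InvariantUnder H (B.orthogonal M0) := invariant_orthogonal B hH hM0inv
  have horthMW : ∀ x ∈ M0, ∀ y ∈ B.orthogonal M0, B x y = 0 := fun x hx y hy => hy x hx
  have hWcnd : NondegOn B (B.orthogonal M0) := by
    intro v hv hperp
    refine hnd v trivial fun u _ => ?_
    have hu : u ∈ M0 ⊔ B.orthogonal M0 := by rw [hcompl.sup_eq_top]; trivial
    obtain ⟨m, hm, wc, hwc, rfl⟩ := Submodule.mem_sup.mp hu
    have e1 : B v m = 0 := by rw [hsymm]; exact horthMW m hm v hv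
    have e2 : B v wc = 0 := hperp wc hwc
    rw [map_add, e1, e2, add_zero]
  obtain ⟨L, hLmem, hLpair, hLsup⟩ := exists_indecomp_list B hsymm H
    (Module.finrank ℝ (B.orthogonal M0)) (B.orthogonal M0) le_rfl hWcnd hWcinv
  set L₁ := L.filter (fun N => decide (fixedSubspace H N = ⊥)) with hL₁def
  set L₂ := L.filter (fun N => !decide (fixedSubspace H N = ⊥)) with hL₂def
  have hfix1 : ∀ N ∈ L₁, fixedSubspace H N = ⊥ := by
    intro N hN
    rw [hL₁def] at hN
    exact of_decide_eq_true (List.mem_filter.mp hN).2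
  have hfix2 : ∀ N ∈ L₂, fixedSubspace H N ≠ ⊥ := by
    intro N hN
    rw [hL₂def] at hN
    have h2 := (List.mem_filter.mp hN).2
    simpa using h2
  have hperm : List.Perm (L₁ ++ L₂) L := List.filter_append_perm _ L
  have hlen : (L₁ ++ L₂).length = L₁.length + L₂.length := List.length_append
  have hlt : ∀ i : Fin (L₁.length + L₂.length), (i : ℕ) < (L₁ ++ L₂).length :=
    fun i => by rw [hlen]; exact i.isLt
  have hmemfin : ∀ N ∈ L₁ ++ L₂, IsIndecomposable B H N ∧ N ≤ B.orthogonal M0 :=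
    fun N hN => hLmem N (hperm.mem_iff.mp hN)
  have hpairfin : (L₁ ++ L₂).Pairwise (fun N N' => ∀ x ∈ N, ∀ y ∈ N', B x y = 0) :=
    (hperm.pairwise_iff (fun {N N'} h x hx y hy => by rw [hsymm]; exact h y hy x hx)).mpr
      hLpair
  have hsupfin : sSup {N | N ∈ L₁ ++ L₂} = B.orthogonal M0 := by
    rw [show {N | N ∈ L₁ ++ L₂} = {N | N ∈ L} from Set.ext fun N => hperm.mem_iff]
    exact hLsup
  have hMle : ∀ i : Fin (L₁.length + L₂.length),
      (L₁ ++ L₂)[(i : ℕ)]'(hlt i) ≤ B.orthogonal M0 :=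
    fun i => (hmemfin _ (List.getElem_mem (hlt i))).2
  have hMind : ∀ i : Fin (L₁.length + L₂.length),
      IsIndecomposable B H ((L₁ ++ L₂)[(i : ℕ)]'(hlt i)) :=
    fun i => (hmemfin _ (List.getElem_mem (hlt i))).1
  have horthall : ∀ i j : Fin (L₁.length + L₂.length + 1), i ≠ j →
      ∀ x ∈ (Fin.cons M0 (fun i => (L₁ ++ L₂)[(i : ℕ)]'(hlt i)) :
        Fin (L₁.length + L₂.length + 1) → Submodule ℝ V) i,
      ∀ y ∈ (Fin.cons M0 (fun i => (L₁ ++ L₂)[(i : ℕ)]'(hlt i)) :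
        Fin (L₁.length + L₂.length + 1) → Submodule ℝ V) j, B x y = 0 := by
    intro i j hij x hx y hy
    rcases Fin.eq_zero_or_eq_succ i with rfl | ⟨i', rfl⟩ <;>
      rcases Fin.eq_zero_or_eq_succ j with rfl | ⟨j', rfl⟩
    · exact absurd rfl hij
    · rw [Fin.cons_zero] at hx
      rw [Fin.cons_succ] at hy
      exact horthMW x hx y (hMle j' hy)
    · rw [Fin.cons_succ] at hx
      rw [Fin.cons_zero] at hy
      rw [hsymm]
      exact horthMW y hy x (hMle i' hx)
    · rw [Fin.cons_succ] at hx hy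
      have hne : (i' : ℕ) ≠ (j' : ℕ) := fun h => hij (congrArg Fin.succ (Fin.ext h))
      have hpg := List.pairwise_iff_getElem.mp hpairfin
      rcases Nat.lt_or_ge (i' : ℕ) (j' : ℕ) with hlt' | hge
      · exact hpg _ _ (hlt i') (hlt j') hlt' x hx y hy
      · have hlt'' : (j' : ℕ) < (i' : ℕ) := lt_of_le_of_ne hge hne.symm
        rw [hsymm]
        exact hpg _ _ (hlt j') (hlt i') hlt'' y hy x hx
  refine ⟨L₁.length, L₂.length, M0, fun i => (L₁ ++ L₂)[(i : ℕ)]'(hlt i),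
    hmax, hM0inv, ?_, ?_, horthall, hMind, ?_, ?_⟩
  · refine indep_of_orth B hsymm _ ?_ horthall
    intro i
    refine Fin.cases ?_ ?_ i
    · exact hmax.2.1
    · intro i'
      exact (hMind i').2.1
  · apply le_antisymm le_top
    rw [← hcompl.sup_eq_top]
    apply sup_le
    · exact le_iSup_of_le 0 (le_of_eq (rfl : M0 = _))
    · rw [← hsupfin]
      apply sSup_le
      rintro N hN
      obtain ⟨k, hk, rfl⟩ := List.mem_iff_getElem.mp hN
      have hk' : k < L₁.length + L₂.length := by rw [← hlen]; exact hk
      refine le_iSup_of_le (Fin.succ ⟨k, hk'⟩) ?_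
      rw [Fin.cons_succ]
  · intro i hi
    show fixedSubspace H ((L₁ ++ L₂)[(i : ℕ)]'(hlt i)) = ⊥
    rw [List.getElem_append_left hi]
    exact hfix1 _ (List.getElem_mem hi)
  · intro i hi
    have hlt2 : (i : ℕ) - L₁.length < L₂.length := by
      have := i.isLt; omega
    constructor
    · show fixedSubspace H ((L₁ ++ L₂)[(i : ℕ)]'(hlt i)) ≠ ⊥
      rw [List.getElem_append_right hi]
      exact hfix2 _ (List.getElem_mem hlt2)
    · show TotallyIsotropic B (fixedSubspace H ((L₁ ++ L₂)[(i : ℕ)]'(hlt i)))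
      refine isotropic_of_max B hsymm hmax ?_ ?_
      · intro x hx
        exact ⟨Submodule.mem_top, (mem_fixedSubspace.mp hx).2⟩
      · intro x hx y hy
        exact horthMW x hx y (hMle i (mem_fixedSubspace.mp hy).1)
end
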